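/- arXiv:1004.4543 — 7 statements merged into one kernel-verified Lean document; each statement's English description precedes it below -/
import Mathlib

section
/- Let (α_p)_{p∈V} be a canonical family with canonical graph (V,E). For each p ∈ V let w_p : V → R be a function all of whose values are homogeneous polynomials of degree 1 (linear forms). Assume that for every p ∈ V there exist polynomials x_{p,r} ∈ R, one for each r ∈ V with λ(r) > λ(p), such that x_{p,r} is homogeneous of degree λ(p)+1−λ(r) (in particular x_{p,r} = 0 when λ(r) > λ(p)+1) and, for every q ∈ V, α_p(q)·(w_p(q) − w_p(p)) = Σ_{r : λ(r)>λ(p)} x_{p,r}·α_r(q). Fix p, q ∈ V and assume moreover: (i) w_{γ_i}(q) ≠ w_{γ_i}(γ_i) for every γ ∈ Σ(p,q) and every 1 ≤ i ≤ |γ|; and (ii) α_r(q) = 0 for every r ∈ V that is E-reachable from p and satisfies λ(r) < λ(q) and Σ(r,q) = ∅. Then, in the field of fractions of R, α_p(q) = Λ_q · Σ_{γ ∈ Σ(p,q)} Π_{i=1}^{|γ|} [(w_{γ_i}(γ_{i+1}) − w_{γ_i}(γ_i)) / (w_{γ_i}(q) − w_{γ_i}(γ_i))] · [α_{γ_i}(γ_{i+1})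 / Λ_{γ_{i+1}}]. -/
/-!
Induct on `lam q - lam p`. Evaluating the expansion of `α_p · (w_p - w_p(p))` at a vertex `r` one
level above `p` isolates its coefficient, `x_{p,r} Λ_r = α_p(r) (w_p(r) - w_p(p))`, so only the
`E`-successors of `p` contribute and the expansion at `q` reads
`α_p(q) (w_p(q) - w_p(p)) = Σ_{p → r} α_p(r) (w_p(r) - w_p(p)) / Λ_r · α_r(q)`.
Dividing by `w_p(q) - w_p(p)`, which is nonzero by (i) at the first edge of any path, and inserting
the induction hypothesis for each successor gives exactly the decomposition of the path sum by
first edge. Without a path both sides vanish, by (ii) or by the support condition on `α_p`.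
-/

open scoped Classical

noncomputable section

/-- A path in a directed graph with edge relation `E`, from `p` to `q`, encoded as a
length `γ.1` together with a `(γ.1 + 1)`-tuple of vertices `γ.2`. -/
def IsPathBetween {V : Type*} (E : V → V → Prop) (p q : V)
    (γ : Σ L : ℕ, Fin (L + 1) → V) : Prop :=
  γ.2 0 = p ∧ γ.2 (Fin.last γ.1) = q ∧ ∀ i : Fin γ.1, E (γ.2 i.castSucc) (γ.2 i.succ)

/-- The canonical map from `ℝ[y_1, …, y_m]` to its field of fractions. -/
def toFF (m : ℕ) : MvPolynomial (Fin m) ℝ →+* FractionRing (MvPolynomial (Fin m) ℝ) :=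
  algebraMap _ _

abbrev VertexSeq (V : Type*) := Σ L : ℕ, Fin (L + 1) → V

namespace VertexSeq

variable {V M : Type*}

def nil (p : V) : VertexSeq V := ⟨0, fun _ => p⟩

def cons (p : V) (δ : VertexSeq V) : VertexSeq V := ⟨δ.1 + 1, Fin.cons p δ.2⟩

def edgeProd [CommMonoid M] (g : V → V → M) (γ : VertexSeq V) : M :=
  ∏ i : Fin γ.1, g (γ.2 i.castSucc) (γ.2 i.succ)

theorem cons_injective (p : V) : Function.Injective (cons p) := by
  rintro ⟨L, g⟩ ⟨L', g'⟩ h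
  simp only [cons, Sigma.mk.inj_iff, add_left_inj] at h
  obtain ⟨rfl, hg⟩ := h
  obtain rfl := Fin.cons_right_injective (α := fun _ => V) p (eq_of_heq hg)
  rfl

@[simp]
theorem cons_fst (p : V) (δ : VertexSeq V) : (cons p δ).1 = δ.1 + 1 := rfl

@[simp]
theorem cons_snd_succ (p : V) (δ : VertexSeq V) (i : Fin (δ.1 + 1)) :
    (cons p δ).2 i.succ = δ.2 i := rfl

variable [CommMonoid M] (g : V → V → M)

theorem edgeProd_nil (p : V) : edgeProd g (nil p) = 1 := Finset.prod_empty

theorem edgeProd_cons (p : V) (δ : VertexSeq V) :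
    edgeProd g (cons p δ) = g p (δ.2 0) * edgeProd g δ := by
  dsimp only [edgeProd, cons]
  rw [Fin.prod_univ_succ]
  simp

end VertexSeq

open VertexSeq

namespace IsPathBetween

variable {V : Type*} {E : V → V → Prop} {p q r : V} {γ δ : VertexSeq V}

theorem nil (E : V → V → Prop) (p : V) : IsPathBetween E p p (nil p) :=
  ⟨rfl, rfl, fun i => i.elim0⟩

theorem eq_nil_of_length_eq_zero (hγ : IsPathBetween E p q γ) (hL : γ.1 = 0) :
    q = p ∧ γ = VertexSeq.nil p := by
  obtain ⟨L, g⟩ := γ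
  obtain ⟨h0, hq, -⟩ := hγ
  dsimp only at hL h0 hq
  subst hL
  have hg : g = fun _ => p := funext fun i => by rw [Fin.fin_one_eq_zero i, h0]
  exact ⟨hq.symm.trans h0, by rw [hg]; rfl⟩

theorem cons (hpr : E p r) (hδ : IsPathBetween E r q δ) :
    IsPathBetween E p q (VertexSeq.cons p δ) := by
  obtain ⟨h0, hq, he⟩ := hδ
  refine ⟨rfl, by simpa [← Fin.succ_last] using hq, fun i => ?_⟩
  induction i using Fin.cases with
  | zero => exact h0 ▸ hpr
  | succ j => simpa [← Fin.succ_castSucc] using he j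

theorem exists_eq_cons (hγ : IsPathBetween E p q γ) (hL : γ.1 ≠ 0) :
    ∃ δ : VertexSeq V, E p (δ.2 0) ∧ IsPathBetween E (δ.2 0) q δ ∧ γ = VertexSeq.cons p δ := by
  obtain ⟨_ | L, g⟩ := γ
  · exact absurd rfl hL
  obtain ⟨h0, hq, he⟩ := hγ
  dsimp only at h0 hq he
  refine ⟨⟨L, Fin.tail g⟩, ?_, ⟨rfl, ?_, fun i => ?_⟩, ?_⟩
  · exact h0 ▸ he 0
  · show g (Fin.last L).succ = q
    rwa [Fin.succ_last]
  · show E (g i.castSucc.succ) (g i.succ.succ)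
    rw [Fin.succ_castSucc]
    exact he i.succ
  · simp only [VertexSeq.cons, ← h0, Fin.cons_self_tail]

theorem lam_eq {lam : V → ℕ} (hlam : ∀ r r', E r r' → lam r' = lam r + 1)
    (hγ : IsPathBetween E p q γ) : lam q = lam p + γ.1 := by
  have key : ∀ i : Fin (γ.1 + 1), lam (γ.2 i) = lam p + i := by
    intro i
    induction i using Fin.induction with
    | zero => simp [hγ.1]
    | succ j ih => rw [hlam _ _ (hγ.2.2 j), ih, Fin.val_succ, Fin.val_castSucc, add_assoc]
  simpa [hγ.2.1] using key (Fin.last γ.1)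

end IsPathBetween

section GradedPaths

variable {V : Type*} {E : V → V → Prop} {lam : V → ℕ}
  (hlam : ∀ r r', E r r' → lam r' = lam r + 1)
include hlam

theorem setOf_isPathBetween_finite [Finite V] (p q : V) :
    {γ | IsPathBetween E p q γ}.Finite := by
  refine (Set.finite_range fun g : Fin (lam q - lam p + 1) → V =>
    (⟨lam q - lam p, g⟩ : VertexSeq V)).subset ?_
  rintro ⟨L, g⟩ hγ
  obtain rfl : L = lam q - lam p := by have : lam q = lam p + L := hγ.lam_eq hlam; omega
  exact ⟨g, rfl⟩

theorem setOf_isPathBetween_self (p : V) :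
    {γ | IsPathBetween E p p γ} = {VertexSeq.nil p} := by
  ext γ
  refine ⟨fun hγ => (hγ.eq_nil_of_length_eq_zero ?_).2, fun h => h ▸ IsPathBetween.nil E p⟩
  have := hγ.lam_eq hlam
  omega

theorem setOf_isPathBetween_eq_biUnion [Fintype V] {p q : V} (hlt : lam p < lam q) :
    {γ | IsPathBetween E p q γ} =
      ⋃ r ∈ (Finset.univ.filter (E p) : Set V), cons p '' {δ | IsPathBetween E r q δ} := by
  ext γ
  simp only [Set.mem_ofPred_eq, Set.mem_iUnion, Set.mem_image, Finset.coe_filter_univ,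
    exists_prop]
  constructor
  · intro hγ
    obtain ⟨δ, hpr, hδ, rfl⟩ := hγ.exists_eq_cons (by have := hγ.lam_eq hlam; omega)
    exact ⟨δ.2 0, hpr, δ, hδ, rfl⟩
  · rintro ⟨r, hpr, δ, hδ, rfl⟩
    exact hδ.cons hpr

theorem finsum_edgeProd_eq_sum {M : Type*} [CommSemiring M] [Fintype V] (g : V → V → M)
    {p q : V} (hlt : lam p < lam q) :
    ∑ᶠ γ ∈ {γ | IsPathBetween E p q γ}, edgeProd g γ =
      ∑ r ∈ Finset.univ.filter (E p),
        g p r * ∑ᶠ δ ∈ {δ | IsPathBetween E r q δ}, edgeProd g δ := by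
  have hdisj : (Finset.univ.filter (E p) : Set V).PairwiseDisjoint
      fun r => cons p '' {δ | IsPathBetween E r q δ} := by
    rintro r - r' - hne
    refine Set.disjoint_left.mpr ?_
    rintro _ ⟨δ, hδ, rfl⟩ ⟨δ', hδ', hcons⟩
    exact hne (hδ.1.symm.trans ((cons_injective p hcons) ▸ hδ'.1))
  rw [setOf_isPathBetween_eq_biUnion hlam hlt, finsum_mem_biUnion hdisj (Finset.finite_toSet _)
    fun r _ => (setOf_isPathBetween_finite hlam r q).image _, finsum_mem_coe_finset]
  refine Finset.sum_congr rfl fun r _ => ?_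
  rw [finsum_mem_image (cons_injective p).injOn, mul_finsum_mem' _ _
    (setOf_isPathBetween_finite hlam r q)]
  refine finsum_mem_congr rfl fun δ hδ => ?_
  rw [edgeProd_cons, hδ.1]

end GradedPaths

section CanonicalFamily

variable {R K V : Type*} [CommRing R] [Field K] [Fintype V] {f : R →+* K}
  {lam : V → ℕ} {Lam : V → R} {α w : V → V → R} {E : V → V → Prop}

def edgeFactor (f : R →+* K) (Lam : V → R) (α w : V → V → R) (q a b : V) : K :=
  (f (w a b) - f (w a a)) / (f (w a q) - f (w a a)) * (f (α a b) / f (Lam b))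

theorem expansion_coeff_mul_eq (hdiag : ∀ p, α p p = Lam p)
    (hvanish : ∀ p q, q ≠ p → lam q ≤ lam p → α p q = 0) {p : V} {x : V → R}
    (hxe : ∀ q, α p q * (w p q - w p p) =
      ∑ r ∈ Finset.univ.filter (fun r => lam p < lam r), x r * α r q)
    {r : V} (hr : lam r = lam p + 1) : x r * Lam r = α p r * (w p r - w p p) := by
  rw [hxe r, Finset.sum_eq_single r, hdiag]
  · intro s hs hsr
    rw [hvanish s r hsr.symm (by simp only [Finset.mem_filter] at hs; omega), mul_zero]
  · simp [hr]

theorem map_mul_sub_eq_sum_succ (hf : Function.Injective f) (hLam0 : ∀ p, Lam p ≠ 0)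
    (hdiag : ∀ p, α p p = Lam p) (hvanish : ∀ p q, q ≠ p → lam q ≤ lam p → α p q = 0)
    (hE : ∀ r r', E r r' ↔ lam r' = lam r + 1 ∧ α r r' ≠ 0) {p : V} {x : V → R}
    (hxz : ∀ r, lam p + 1 < lam r → x r = 0)
    (hxe : ∀ q, α p q * (w p q - w p p) =
      ∑ r ∈ Finset.univ.filter (fun r => lam p < lam r), x r * α r q) (q : V) :
    f (α p q) * (f (w p q) - f (w p p)) =
      ∑ r ∈ Finset.univ.filter (E p),
        f (α p r) * (f (w p r) - f (w p p)) / f (Lam r) * f (α r q) := by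
  have hcoeff : ∀ r, lam r = lam p + 1 →
      f (x r) = f (α p r) * (f (w p r) - f (w p p)) / f (Lam r) := fun r hr => by
    rw [eq_div_iff ((map_ne_zero_iff f hf).mpr (hLam0 r)), ← map_sub, ← map_mul, ← map_mul,
      expansion_coeff_mul_eq hdiag hvanish hxe hr]
  have hsub : Finset.univ.filter (E p) ⊆ Finset.univ.filter (fun r => lam p < lam r) := by
    intro r
    simp only [Finset.mem_filter, Finset.mem_univ, true_and]
    intro hpr
    have := ((hE p r).1 hpr).1
    omega
  rw [← map_sub, ← map_mul, hxe q, map_sum, ← Finset.sum_subset hsub]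
  · refine Finset.sum_congr rfl fun r hr => ?_
    rw [map_mul, hcoeff r ((hE p r).1 (Finset.mem_filter.1 hr).2).1]
  · intro r hr hpr
    simp only [Finset.mem_filter, Finset.mem_univ, true_and] at hr hpr
    rcases (Nat.succ_le_of_lt hr).eq_or_lt with hr1 | hr1
    · have hα : α p r = 0 := not_not.mp fun h => hpr ((hE p r).2 ⟨hr1.symm, h⟩)
      rw [map_mul, hcoeff r hr1.symm, hα, map_zero, zero_mul, zero_div, zero_mul]
    · rw [hxz r hr1, zero_mul, map_zero]

theorem map_apply_eq_mul_finsum_edgeProd (hf : Function.Injective f) (hLam0 : ∀ p, Lam p ≠ 0)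
    (hdiag : ∀ p, α p p = Lam p) (hvanish : ∀ p q, q ≠ p → lam q ≤ lam p → α p q = 0)
    (hE : ∀ r r', E r r' ↔ lam r' = lam r + 1 ∧ α r r' ≠ 0)
    (hx : ∀ p : V, ∃ x : V → R, (∀ r, lam p + 1 < lam r → x r = 0) ∧
      ∀ q, α p q * (w p q - w p p) =
        ∑ r ∈ Finset.univ.filter (fun r => lam p < lam r), x r * α r q)
    {p q : V}
    (hnz : ∀ γ, IsPathBetween E p q γ →
      ∀ i : Fin γ.1, w (γ.2 i.castSucc) q ≠ w (γ.2 i.castSucc) (γ.2 i.castSucc))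
    (hvan2 : ∀ r, (∃ γ, IsPathBetween E p r γ) → lam r < lam q →
      (¬ ∃ γ, IsPathBetween E r q γ) → α r q = 0) :
    f (α p q) = f (Lam q) *
      ∑ᶠ γ ∈ {γ | IsPathBetween E p q γ}, edgeProd (edgeFactor f Lam α w q) γ := by
  have hlam : ∀ r r', E r r' → lam r' = lam r + 1 := fun r r' h => ((hE r r').1 h).1
  induction hn : lam q - lam p using Nat.strong_induction_on generalizing p with
  | _ n ih =>
  by_cases hpath : ∃ γ, IsPathBetween E p q γ
  swap
  · have hα : α p q = 0 := by
      rcases lt_or_ge (lam p) (lam q) with hlt | hle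
      · exact hvan2 p ⟨_, .nil E p⟩ hlt hpath
      · exact hvanish p q (by rintro rfl; exact hpath ⟨_, .nil E q⟩) hle
    have hempty : {γ | IsPathBetween E p q γ} = ∅ :=
      Set.eq_empty_of_forall_notMem fun γ hγ => hpath ⟨γ, hγ⟩
    rw [hα, hempty, finsum_mem_empty, map_zero, mul_zero]
  obtain ⟨γ, hγ⟩ := hpath
  rcases Nat.eq_zero_or_pos γ.1 with hL | hL
  · obtain ⟨rfl, -⟩ := hγ.eq_nil_of_length_eq_zero hL
    rw [hdiag, setOf_isPathBetween_self hlam, finsum_mem_singleton, edgeProd_nil, mul_one]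
  have hlt : lam p < lam q := by have := hγ.lam_eq hlam; omega
  have hd : f (w p q) - f (w p p) ≠ 0 := by
    rw [sub_ne_zero, hf.ne_iff]
    simpa [hγ.1] using hnz γ hγ ⟨0, hL⟩
  have hsucc : ∀ r, E p r → f (α r q) = f (Lam q) *
      ∑ᶠ δ ∈ {δ | IsPathBetween E r q δ}, edgeProd (edgeFactor f Lam α w q) δ :=
    fun r hpr => ih _ (by have := hlam p r hpr; omega)
      (fun δ hδ i => by simpa using hnz _ (hδ.cons hpr) i.succ)
      (fun s ⟨δ, hδ⟩ => hvan2 s ⟨_, hδ.cons hpr⟩) rfl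
  obtain ⟨x, hxz, hxe⟩ := hx p
  rw [eq_div_of_mul_eq hd (map_mul_sub_eq_sum_succ hf hLam0 hdiag hvanish hE hxz hxe q),
    finsum_edgeProd_eq_sum hlam _ hlt, Finset.mul_sum, Finset.sum_div]
  refine Finset.sum_congr rfl fun r hr => ?_
  rw [hsucc r (Finset.mem_filter.1 hr).2, edgeFactor]
  field_simp

end CanonicalFamily

theorem stmt_0_general {m : ℕ} {V : Type*} [Fintype V]
    (lam : V → ℕ) (Lam : V → MvPolynomial (Fin m) ℝ)
    (hLam0 : ∀ p, Lam p ≠ 0)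
    (α : V → V → MvPolynomial (Fin m) ℝ)
    (hdiag : ∀ p, α p p = Lam p)
    (hvanish : ∀ p q, q ≠ p → lam q ≤ lam p → α p q = 0)
    (E : V → V → Prop)
    (hE : ∀ r r', E r r' ↔ lam r' = lam r + 1 ∧ α r r' ≠ 0)
    (w : V → V → MvPolynomial (Fin m) ℝ)
    (hx : ∀ p : V, ∃ x : V → MvPolynomial (Fin m) ℝ,
      (∀ r, lam r = lam p + 1 → (x r).IsHomogeneous 0) ∧
      (∀ r, lam p + 1 < lam r → x r = 0) ∧
      ∀ q : V, α p q * (w p q - w p p) =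
        ∑ r ∈ Finset.univ.filter (fun r => lam p < lam r), x r * α r q)
    (p q : V)
    (hnz : ∀ γ : Σ L : ℕ, Fin (L + 1) → V, IsPathBetween E p q γ →
      ∀ i : Fin γ.1, w (γ.2 i.castSucc) q ≠ w (γ.2 i.castSucc) (γ.2 i.castSucc))
    (hvan2 : ∀ r : V, (∃ γ : Σ L : ℕ, Fin (L + 1) → V, IsPathBetween E p r γ) →
      lam r < lam q →
      (¬ ∃ γ : Σ L : ℕ, Fin (L + 1) → V, IsPathBetween E r q γ) → α r q = 0) :
    toFF m (α p q) =
      toFF m (Lam q) *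
      ∑ᶠ (γ : Σ L : ℕ, Fin (L + 1) → V) (_ : IsPathBetween E p q γ),
        ∏ i : Fin γ.1,
          ((toFF m (w (γ.2 i.castSucc) (γ.2 i.succ)) -
              toFF m (w (γ.2 i.castSucc) (γ.2 i.castSucc))) /
            (toFF m (w (γ.2 i.castSucc) q) -
              toFF m (w (γ.2 i.castSucc) (γ.2 i.castSucc)))) *
          (toFF m (α (γ.2 i.castSucc) (γ.2 i.succ)) / toFF m (Lam (γ.2 i.succ))) :=
  map_apply_eq_mul_finsum_edgeProd (IsFractionRing.injective _ _) hLam0 hdiag hvanish hE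
    (fun p => (hx p).imp fun _ hx => hx.2) hnz hvan2

theorem stmt_0 {m : ℕ} {V : Type*} [Fintype V]
    (lam : V → ℕ) (Lam : V → MvPolynomial (Fin m) ℝ)
    (hLam0 : ∀ p, Lam p ≠ 0)
    (hLamhom : ∀ p, (Lam p).IsHomogeneous (lam p))
    (α : V → V → MvPolynomial (Fin m) ℝ)
    (hdiag : ∀ p, α p p = Lam p)
    (hvanish : ∀ p q, q ≠ p → lam q ≤ lam p → α p q = 0)
    (E : V → V → Prop)
    (hE : ∀ r r', E r r' ↔ lam r' = lam r + 1 ∧ α r r' ≠ 0)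
    (w : V → V → MvPolynomial (Fin m) ℝ)
    (hwlin : ∀ p q, (w p q).IsHomogeneous 1)
    (hx : ∀ p : V, ∃ x : V → MvPolynomial (Fin m) ℝ,
      (∀ r, lam r = lam p + 1 → (x r).IsHomogeneous 0) ∧
      (∀ r, lam p + 1 < lam r → x r = 0) ∧
      ∀ q : V, α p q * (w p q - w p p) =
        ∑ r ∈ Finset.univ.filter (fun r => lam p < lam r), x r * α r q)
    (p q : V)
    (hnz : ∀ γ : Σ L : ℕ, Fin (L + 1) → V, IsPathBetween E p q γ →
      ∀ i : Fin γ.1, w (γ.2 i.castSucc) q ≠ w (γ.2 i.castSucc) (γ.2 i.castSucc))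
    (hvan2 : ∀ r : V, (∃ γ : Σ L : ℕ, Fin (L + 1) → V, IsPathBetween E p r γ) →
      lam r < lam q →
      (¬ ∃ γ : Σ L : ℕ, Fin (L + 1) → V, IsPathBetween E r q γ) → α r q = 0) :
    toFF m (α p q) =
      toFF m (Lam q) *
      ∑ᶠ (γ : Σ L : ℕ, Fin (L + 1) → V) (_ : IsPathBetween E p q γ),
        ∏ i : Fin γ.1,
          ((toFF m (w (γ.2 i.castSucc) (γ.2 i.succ)) -
              toFF m (w (γ.2 i.castSucc) (γ.2 i.castSucc))) /
            (toFF m (w (γ.2 i.castSucc) q) -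
              toFF m (w (γ.2 i.castSucc) (γ.2 i.castSucc)))) *
          (toFF m (α (γ.2 i.castSucc) (γ.2 i.succ)) / toFF m (Lam (γ.2 i.succ))) :=
  stmt_0_general lam Lam hLam0 α hdiag hvanish E hE w hx p q hnz hvan2
end
end

section
/- Let (α_p)_{p∈V} be a canonical family with canonical graph (V,E), let ξ ∈ ℝ^m, and let w_1,…,w_k : V → R be functions whose values are linear forms, satisfying: (a) for every j ∈ {1,…,k} and every p ∈ V there exist polynomials x_{j,p,r} ∈ R, homogeneous of degree λ(p)+1−λ(r) (so zero when λ(r) > λ(p)+1), with α_p(q)·(w_j(q) − w_j(p)) = Σ_{r : λ(r)>λ(p)} x_{j,p,r}·α_r(q) for all q ∈ V; (b) for all j and all p,q ∈ V: if w_j(q) ≠ w_j(p) and (w_j(q) − w_j(p))(ξ) ≤ 0 then α_p(q) = 0; (c) for every edge (r,r′) ∈ E there is some j with w_j(r) ≠ w_j(r′), and one sets h(r,r′) = min{j : w_j(r) ≠ w_j(r′)}. Fix p,q ∈ V and assume also (d) α_r(q) = 0 for every r that is E-reachable from p with λ(r) < λ(q) and Σ(r,q) = ∅. Let C(p,q)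 = {γ ∈ Σ(p,q) : h(γ_1,γ_2) ≤ h(γ_2,γ_3) ≤ ⋯ ≤ h(γ_{|γ|},γ_{|γ|+1})}. Then for every γ ∈ C(p,q) and every i the linear form w_{h_i}(q) − w_{h_i}(γ_i) is nonzero, where h_i = h(γ_i,γ_{i+1}), and α_p(q) = Λ_q · Σ_{γ ∈ C(p,q)} Π_{i=1}^{|γ|} [(w_{h_i}(γ_{i+1}) − w_{h_i}(γ_i)) / (w_{h_i}(q) − w_{h_i}(γ_i))] · [α_{γ_i}(γ_{i+1}) / Λ_{γ_{i+1}}]. -/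
/-!
By (b), along an edge `(r, r')` each value `w_j(·)(ξ)` weakly increases, strictly where `w_j`
changes. So on a path to `q` the form `w_{h(r,r')}` takes different values at `r` and at `q`:
the denominators do not vanish.

If `i₀` is the first index with `w_{i₀}(q) ≠ w_{i₀}(a)`, then (a) for `j = i₀`, read at `q` and
at the vertices `r` with `λ(r) = λ(a) + 1`, writes `α_a(q)` as a sum over the edges `(a, r)` of
the path factor (computed with `w_{i₀}`) times `α_r(q)`. By (b) only the edges with
`h(a, r) = i₀` contribute, and for those `w(q)` and `w(r)` agree below `h(a, r)`. Induction on
`λ(q) - λ(a)` then shows that `Λ_q` times the sum over `h`-increasing paths from `a` to `q` with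
all `h`-values `≥ j` is `α_a(q)` if `w(q)` and `w(a)` agree below `j`, and `0` otherwise. When
they agree everywhere, `a` cannot reach `q`, and (d) gives `α_a(q) = 0`.
-/

open scoped Classical

noncomputable section

/-- The condition that the values of `h` along the consecutive edges of the path `γ`
form a (weakly) increasing chain. -/
def HChainMono {V k : Type*} [Preorder k] (h : V → V → k)
    (γ : Σ L : ℕ, Fin (L + 1) → V) : Prop :=
  ∀ i j : Fin γ.1, i ≤ j →
    h (γ.2 i.castSucc) (γ.2 i.succ) ≤ h (γ.2 j.castSucc) (γ.2 j.succ)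

open Finset Relation

section Paths

variable {V : Type*} (E : V → V → Prop)

lemma isPathBetween_cons {L : ℕ} {a b x : V} {g : Fin (L + 1) → V} :
    IsPathBetween E a b ⟨L + 1, Fin.cons x g⟩ ↔
      x = a ∧ E x (g 0) ∧ IsPathBetween E (g 0) b ⟨L, g⟩ := by
  simp only [IsPathBetween, Fin.forall_fin_succ, ← Fin.succ_last, ← Fin.succ_castSucc,
    Fin.cons_zero, Fin.cons_succ, Fin.castSucc_zero, true_and]
  tauto

variable {E}

lemma IsPathBetween.reflTransGen_start {a b : V} {γ : Σ L : ℕ, Fin (L + 1) → V}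
    (hγ : IsPathBetween E a b γ) (i : Fin (γ.1 + 1)) : ReflTransGen E a (γ.2 i) := by
  induction i using Fin.induction with
  | zero => rw [hγ.1]
  | succ i ih => exact ih.tail (hγ.2.2 i)

lemma IsPathBetween.reflTransGen_end {a b : V} {γ : Σ L : ℕ, Fin (L + 1) → V}
    (hγ : IsPathBetween E a b γ) (i : Fin (γ.1 + 1)) : ReflTransGen E (γ.2 i) b := by
  induction i using Fin.reverseInduction with
  | last => rw [hγ.2.1]
  | cast i ih => exact ih.head (hγ.2.2 i)

lemma exists_isPathBetween_iff {a b : V} :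
    (∃ γ, IsPathBetween E a b γ) ↔ ReflTransGen E a b := by
  refine ⟨fun ⟨γ, hγ⟩ => hγ.2.1 ▸ hγ.reflTransGen_start (Fin.last _), fun hab => ?_⟩
  induction hab using ReflTransGen.head_induction_on with
  | refl => exact ⟨⟨0, fun _ => b⟩, rfl, rfl, fun i => i.elim0⟩
  | head hac _ ih =>
    obtain ⟨⟨L, g⟩, hg⟩ := ih
    have hg0 : g 0 = _ := hg.1
    refine ⟨⟨L + 1, Fin.cons _ g⟩, (isPathBetween_cons E).2 ⟨rfl, ?_, ?_⟩⟩ <;> rw [hg0]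
    exacts [hac, hg]

lemma IsPathBetween.length_eq {lam : V → ℕ} (hlam : ∀ r r', E r r' → lam r' = lam r + 1)
    {a b : V} {γ : Σ L : ℕ, Fin (L + 1) → V} (hγ : IsPathBetween E a b γ) :
    lam b = lam a + γ.1 := by
  have key : ∀ i : Fin (γ.1 + 1), lam (γ.2 i) = lam a + i := by
    intro i
    induction i using Fin.induction with
    | zero => rw [hγ.1]; rfl
    | succ i ih => rw [hlam _ _ (hγ.2.2 i), ih]; simp [add_assoc]
  simpa [hγ.2.1] using key (Fin.last _)

end Paths

lemma Fin.monotone_cons_iff {α : Type*} [Preorder α] {n : ℕ} {a : α} {f : Fin n → α} :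
    Monotone (Fin.cons a f : Fin (n + 1) → α) ↔ (∀ i, a ≤ f i) ∧ Monotone f := by
  rw [monotone_iff_forall_lt, monotone_iff_forall_lt]
  exact Fin.liftFun_cons (· ≤ ·)

section MonoPaths

variable {V ι M : Type*} [Preorder ι] [CommSemiring M]
  (E : V → V → Prop) (h : V → V → ι) (wt : V → V → M) (b : V)

/-- Prepending `j` to the `h`-values of the edges makes monotonicity also say they are `≥ j`. -/
def IsMonoPathFrom (j : WithBot ι) (a : V) {L : ℕ} (f : Fin (L + 1) → V) : Prop :=
  IsPathBetween E a b ⟨L, f⟩ ∧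
    Monotone (Fin.cons j fun i : Fin L => (h (f i.castSucc) (f i.succ) : WithBot ι))

variable [Fintype V] in
def monoPathSum (L : ℕ) (a : V) (j : WithBot ι) : M :=
  ∑ f : Fin (L + 1) → V,
    if IsMonoPathFrom E h b j a f then ∏ i : Fin L, wt (f i.castSucc) (f i.succ) else 0

variable {E h b}

lemma isMonoPathFrom_bot_iff {a : V} {L : ℕ} {f : Fin (L + 1) → V} :
    IsMonoPathFrom E h b ⊥ a f ↔
      IsPathBetween E a b ⟨L, f⟩ ∧ HChainMono h ⟨L, f⟩ := by
  rw [IsMonoPathFrom, Fin.monotone_cons_iff]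
  simp only [bot_le, implies_true, true_and, Monotone, WithBot.coe_le_coe, HChainMono]

lemma isMonoPathFrom_zero {j : WithBot ι} {a : V} {f : Fin 1 → V} :
    IsMonoPathFrom E h b j a f ↔ f 0 = a ∧ a = b := by
  simp only [IsMonoPathFrom, IsPathBetween, Fin.last_zero, IsEmpty.forall_iff, and_true]
  exact ⟨fun ⟨⟨h0, h1⟩, _⟩ => ⟨h0, h0.symm.trans h1⟩, fun ⟨h0, hab⟩ =>
    ⟨⟨h0, h0.trans hab⟩, fun i i' _ => by rw [Subsingleton.elim (α := Fin 1) i i']⟩⟩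

lemma isMonoPathFrom_cons {j : WithBot ι} {a x : V} {L : ℕ} {g : Fin (L + 1) → V} :
    IsMonoPathFrom E h b j a (Fin.cons x g : Fin (L + 1 + 1) → V) ↔
      x = a ∧ E a (g 0) ∧ j ≤ h a (g 0) ∧ IsMonoPathFrom E h b (h a (g 0)) (g 0) g := by
  have hsteps : (fun i : Fin (L + 1) => (h ((Fin.cons x g : Fin (L + 1 + 1) → V) i.castSucc)
      ((Fin.cons x g : Fin (L + 1 + 1) → V) i.succ) : WithBot ι)) =
      Fin.cons (h x (g 0) : WithBot ι)
        fun i : Fin L => (h (g i.castSucc) (g i.succ) : WithBot ι) := by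
    funext i
    induction i using Fin.cases <;> simp
  rw [IsMonoPathFrom, isPathBetween_cons, hsteps, ← Matrix.vecCons, monotone_vecCons]
  constructor
  · rintro ⟨⟨rfl, hE, hg⟩, hj, hmono⟩
    exact ⟨rfl, hE, hj, hg, hmono⟩
  · rintro ⟨rfl, hE, hj, hg, hmono⟩
    exact ⟨⟨rfl, hE, hg⟩, hj, hmono⟩

variable (E h b) [Fintype V]

lemma monoPathSum_zero (a : V) (j : WithBot ι) :
    monoPathSum E h wt b 0 a j = if a = b then 1 else 0 := by
  rw [monoPathSum, ← (Equiv.funUnique (Fin 1) V).symm.sum_comp]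
  simp [isMonoPathFrom_zero, Finset.sum_ite_eq', ite_and]

lemma monoPathSum_succ (L : ℕ) (a : V) (j : WithBot ι) :
    monoPathSum E h wt b (L + 1) a j =
      ∑ r, if E a r ∧ j ≤ h a r then wt a r * monoPathSum E h wt b L r (h a r) else 0 := by
  rw [monoPathSum, ← (Fin.consEquiv fun _ => V).sum_comp, Fintype.sum_prod_type, Finset.sum_comm]
  simp only [Fin.consEquiv, Equiv.coe_fn_mk, isMonoPathFrom_cons, ite_and, Finset.sum_ite_eq',
    Finset.mem_univ, if_true, Fin.prod_univ_succ, Fin.cons_zero, Fin.cons_succ, Fin.castSucc_zero,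
    ← Fin.succ_castSucc, monoPathSum, Finset.mul_sum, mul_ite, mul_zero]
  calc _ = ∑ g : Fin (L + 1) → V, ∑ r, if E a r then if j ≤ ↑(h a r) then
            if IsMonoPathFrom E h b (h a r) r g then
              wt a r * ∏ i : Fin L, wt (g i.castSucc) (g i.succ)
            else 0 else 0 else 0 := by
        refine Finset.sum_congr rfl fun g _ => ?_
        rw [Finset.sum_eq_single_of_mem (g 0) (Finset.mem_univ _)]
        intro r _ hr
        simp [show ¬IsMonoPathFrom E h b (h a r) r g from fun hg => hr hg.1.1.symm]
    _ = _ := by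
        rw [Finset.sum_comm]
        refine Finset.sum_congr rfl fun r _ => ?_
        split_ifs <;> simp

end MonoPaths

lemma finsum_isPathBetween_hChainMono {V ι M : Type*} [Fintype V] [Preorder ι] [CommSemiring M]
    {E : V → V → Prop} (h : V → V → ι) (wt : V → V → M) {lam : V → ℕ}
    (hlam : ∀ r r', E r r' → lam r' = lam r + 1) (a b : V) :
    ∑ᶠ (γ : Σ L : ℕ, Fin (L + 1) → V) (_ : IsPathBetween E a b γ ∧ HChainMono h γ),
      ∏ i : Fin γ.1, wt (γ.2 i.castSucc) (γ.2 i.succ) =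
    monoPathSum E h wt b (lam b - lam a) a ⊥ := by
  have hpaths : {γ : Σ L : ℕ, Fin (L + 1) → V | IsPathBetween E a b γ ∧ HChainMono h γ} =
      Sigma.mk (lam b - lam a) '' {f | IsMonoPathFrom E h b ⊥ a f} := by
    ext ⟨L, f⟩
    simp only [Set.mem_ofPred_eq, Set.mem_image, isMonoPathFrom_bot_iff]
    constructor
    · intro hγ
      obtain rfl : L = lam b - lam a := by have := hγ.1.length_eq hlam; simp only at this; omega
      exact ⟨f, hγ, rfl⟩
    · rintro ⟨f, hf, hγ⟩
      cases hγ
      exact hf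
  calc _ = ∑ᶠ γ ∈ {γ : Σ L : ℕ, Fin (L + 1) → V |
              IsPathBetween E a b γ ∧ HChainMono h γ},
          ∏ i : Fin γ.1, wt (γ.2 i.castSucc) (γ.2 i.succ) := rfl
    _ = _ := by
      rw [hpaths, finsum_mem_image sigma_mk_injective.injOn, finsum_mem_def,
        finsum_eq_sum_of_fintype, monoPathSum]
      simp only [Set.indicator_apply, Set.mem_ofPred_eq]

section FirstDifference

variable {ι V β : Type*} [LinearOrder ι] (w : ι → V → β)

def AgreeBelow (j : WithBot ι) (a b : V) : Prop :=
  ∀ i : ι, (i : WithBot ι) < j → w i a = w i b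

def IsFirstDiff (i : ι) (a b : V) : Prop :=
  AgreeBelow w i a b ∧ w i a ≠ w i b

variable {w}

lemma agreeBelow_bot (a b : V) : AgreeBelow w ⊥ a b :=
  fun _ hi => absurd hi not_lt_bot

lemma agreeBelow_refl (j : WithBot ι) (a : V) : AgreeBelow w j a a :=
  fun _ _ => rfl

lemma AgreeBelow.symm {j : WithBot ι} {a b : V} (hab : AgreeBelow w j a b) :
    AgreeBelow w j b a :=
  fun i hi => (hab i hi).symm

lemma AgreeBelow.trans {j : WithBot ι} {a b c : V} (hab : AgreeBelow w j a b)
    (hbc : AgreeBelow w j b c) : AgreeBelow w j a c :=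
  fun i hi => (hab i hi).trans (hbc i hi)

lemma agreeBelow_of_forall_le {i : ι} {a b : V} (hmin : ∀ j, w j a ≠ w j b → i ≤ j) :
    AgreeBelow w i a b :=
  fun j hj => not_not.1 fun hne => (WithBot.coe_lt_coe.1 hj).not_ge (hmin j hne)

lemma IsFirstDiff.le_iff {i : ι} {a b : V} (hi : IsFirstDiff w i a b) (j : WithBot ι) :
    j ≤ i ↔ AgreeBelow w j a b :=
  ⟨fun hj i' hi' => hi.1 i' (hi'.trans_le hj), fun hj => not_lt.1 fun hlt => hi.2 (hj i hlt)⟩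

lemma IsFirstDiff.unique {i i' : ι} {a b : V} (hi : IsFirstDiff w i a b)
    (hi' : IsFirstDiff w i' a b) : i = i' :=
  le_antisymm (WithBot.coe_le_coe.1 ((hi'.le_iff i).2 hi.1))
    (WithBot.coe_le_coe.1 ((hi.le_iff i').2 hi'.1))

lemma exists_isFirstDiff [WellFoundedLT ι] {a b : V} (h : ∃ i, w i a ≠ w i b) :
    ∃ i, IsFirstDiff w i a b := by
  obtain ⟨i, hi, hmin⟩ := wellFounded_lt.has_min {i | w i a ≠ w i b} h
  exact ⟨i, fun j hj => not_not.1 fun hne => hmin j hne (WithBot.coe_lt_coe.1 hj), hi⟩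

end FirstDifference

section Positivity

variable {V R ι : Type*} [CommRing R] {E : V → V → Prop} {α : V → V → R}
  {w : ι → V → R} {ev : R →+ ℝ}

lemma ev_lt_of_alpha_ne_zero
    (hb : ∀ j p q, w j q ≠ w j p → ev (w j q - w j p) ≤ 0 → α p q = 0)
    {a b : V} {j : ι} (hα : α a b ≠ 0) (hw : w j b ≠ w j a) : ev (w j a) < ev (w j b) := by
  by_contra hle
  exact hα (hb j a b hw (by rw [map_sub]; linarith [not_lt.1 hle]))

lemma ev_le_of_reflTransGen (hEα : ∀ r r', E r r' → α r r' ≠ 0)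
    (hb : ∀ j p q, w j q ≠ w j p → ev (w j q - w j p) ≤ 0 → α p q = 0)
    {a b : V} (hab : ReflTransGen E a b) (j : ι) : ev (w j a) ≤ ev (w j b) := by
  induction hab with
  | refl => exact le_rfl
  | @tail c d _ hcd ih =>
    refine ih.trans ?_
    by_cases hw : w j d = w j c
    · rw [hw]
    · exact (ev_lt_of_alpha_ne_zero hb (hEα c d hcd) hw).le

lemma ne_of_edge_of_reflTransGen (hEα : ∀ r r', E r r' → α r r' ≠ 0)
    (hb : ∀ j p q, w j q ≠ w j p → ev (w j q - w j p) ≤ 0 → α p q = 0)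
    {a b c : V} {j : ι} (hab : E a b) (hw : w j a ≠ w j b) (hbc : ReflTransGen E b c) :
    w j c ≠ w j a := fun hca =>
  ((ev_lt_of_alpha_ne_zero hb (hEα a b hab) (Ne.symm hw)).trans_le
    (ev_le_of_reflTransGen hEα hb hbc j)).ne (by rw [hca])

lemma alpha_eq_zero_of_edge (hEα : ∀ r r', E r r' → α r r' ≠ 0)
    (hb : ∀ j p q, w j q ≠ w j p → ev (w j q - w j p) ≤ 0 → α p q = 0)
    {a r b : V} {i : ι} (har : E a r) (hwb : w i b = w i a) (hw : w i a ≠ w i r) :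
    α r b = 0 := by
  by_contra hα
  have hlt := ev_lt_of_alpha_ne_zero hb hα (by rwa [hwb])
  rw [hwb] at hlt
  exact lt_asymm hlt (ev_lt_of_alpha_ne_zero hb (hEα a r har) (Ne.symm hw))

lemma ite_agreeBelow_eq_ite_isFirstDiff [LinearOrder ι] (hEα : ∀ r r', E r r' → α r r' ≠ 0)
    (hb : ∀ j p q, w j q ≠ w j p → ev (w j q - w j p) ≤ 0 → α p q = 0)
    {h : V → V → ι} (hmin : ∀ r r', E r r' →
      w (h r r') r ≠ w (h r r') r' ∧ ∀ j, w j r ≠ w j r' → h r r' ≤ j)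
    {a r q : V} (har : E a r) :
    (if AgreeBelow w (h a r) q r then α r q else 0) =
      if IsFirstDiff w (h a r) q a then α r q else 0 := by
  have hstep : AgreeBelow w (h a r) a r := agreeBelow_of_forall_le (hmin a r har).2
  by_cases hfd : IsFirstDiff w (h a r) q a
  · rw [if_pos (hfd.1.trans hstep), if_pos hfd]
  · rw [if_neg hfd, ite_eq_right_iff]
    intro hqr
    have hqa : w (h a r) q = w (h a r) a := not_not.1 fun hne => hfd ⟨hqr.trans hstep.symm, hne⟩
    exact alpha_eq_zero_of_edge hEα hb har hqa (hmin a r har).1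

end Positivity

section Expansion

variable {V R K ι : Type*} [Fintype V] [CommRing R] [Field K]

def stepWeight (φ : R →+* K) (Lam : V → R) (α : V → V → R) (w : ι → V → R) (j : ι)
    (a r b : V) : K :=
  (φ (w j r) - φ (w j a)) / (φ (w j b) - φ (w j a)) * (φ (α a r) / φ (Lam r))

variable {φ : R →+* K} {lam : V → ℕ} {Lam : V → R} {α : V → V → R}
  {E : V → V → Prop} {w : ι → V → R}

lemma map_alpha_eq_sum_stepWeight (hφ : Function.Injective φ) (hLam0 : ∀ p, Lam p ≠ 0)
    (hdiag : ∀ p, α p p = Lam p) (hvanish : ∀ p q, q ≠ p → lam q ≤ lam p → α p q = 0)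
    (hE : ∀ r r', E r r' ↔ lam r' = lam r + 1 ∧ α r r' ≠ 0) {j : ι} {a b : V}
    {x : V → R} (hx0 : ∀ r, lam a + 1 < lam r → x r = 0)
    (hx : ∀ q, α a q * (w j q - w j a) =
      ∑ r ∈ univ.filter (fun r => lam a < lam r), x r * α r q)
    (hwb : w j b ≠ w j a) :
    φ (α a b) = ∑ r, if E a r then stepWeight φ Lam α w j a r b * φ (α r b) else 0 := by
  have hφx : ∀ r, lam a < lam r →
      φ (x r) = if E a r then (φ (w j r) - φ (w j a)) * (φ (α a r) / φ (Lam r)) else 0 := by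
    intro r hr
    rcases (Nat.succ_le_of_lt hr).eq_or_lt with hr1 | hr1
    · have hxr : α a r * (w j r - w j a) = x r * Lam r := by
        rw [hx r, Finset.sum_eq_single_of_mem r (by simpa using hr), hdiag]
        intro r' hr' hne
        rw [hvanish r' r (Ne.symm hne) (by simp at hr'; omega), mul_zero]
      have hΛ : φ (Lam r) ≠ 0 := (map_ne_zero_iff φ hφ).2 (hLam0 r)
      have hφxr : φ (x r) = φ (α a r) * (φ (w j r) - φ (w j a)) / φ (Lam r) := by
        rw [eq_div_iff hΛ, ← map_sub, ← map_mul, ← map_mul, hxr]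
      split_ifs with har
      · rw [hφxr]; ring
      · have hα : α a r = 0 := not_not.1 fun hα => har ((hE a r).2 ⟨hr1.symm, hα⟩)
        rw [hφxr, hα, map_zero, zero_mul, zero_div]
    · rw [hx0 r hr1, map_zero, if_neg fun har => by have := ((hE a r).1 har).1; omega]
  have hD : φ (w j b) - φ (w j a) ≠ 0 := sub_ne_zero.2 fun h => hwb (hφ h)
  have key : φ (α a b) * (φ (w j b) - φ (w j a)) =
      ∑ r, if E a r then
        (φ (w j r) - φ (w j a)) * (φ (α a r) / φ (Lam r)) * φ (α r b) else 0 := by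
    rw [← map_sub, ← map_mul, hx b, map_sum, Finset.sum_filter]
    refine Finset.sum_congr rfl fun r _ => ?_
    split_ifs with hr har har
    · rw [map_mul, hφx r hr, if_pos har]
    · rw [map_mul, hφx r hr, if_neg har, zero_mul]
    · exact absurd ((hE a r).1 har).1 (by omega)
    · rfl
  rw [← eq_div_iff hD] at key
  rw [key, Finset.sum_div]
  refine Finset.sum_congr rfl fun r _ => ?_
  split_ifs
  · rw [stepWeight]; ring
  · exact zero_div _

end Expansion

section PathSumFormula

variable {V R K ι : Type*} [Fintype V] [CommRing R] [Field K] [LinearOrder ι] [WellFoundedLT ι]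
  {φ : R →+* K} {lam : V → ℕ} {Lam : V → R} {α : V → V → R} {E : V → V → Prop}
  {w : ι → V → R} {ev : R →+ ℝ} {h : V → V → ι}

lemma map_alpha_eq_sum_isFirstDiff (hφ : Function.Injective φ) (hLam0 : ∀ p, Lam p ≠ 0)
    (hdiag : ∀ p, α p p = Lam p) (hvanish : ∀ p q, q ≠ p → lam q ≤ lam p → α p q = 0)
    (hE : ∀ r r', E r r' ↔ lam r' = lam r + 1 ∧ α r r' ≠ 0)
    (hb : ∀ j p q, w j q ≠ w j p → ev (w j q - w j p) ≤ 0 → α p q = 0)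
    (hmin : ∀ r r', E r r' →
      w (h r r') r ≠ w (h r r') r' ∧ ∀ j, w j r ≠ w j r' → h r r' ≤ j)
    {a q : V} (ha : ∀ j, ∃ x : V → R, (∀ r, lam a + 1 < lam r → x r = 0) ∧
      ∀ b, α a b * (w j b - w j a) =
        ∑ r ∈ univ.filter (fun r => lam a < lam r), x r * α r b)
    (hne : a ≠ q) (hd : ¬ReflTransGen E a q → α a q = 0) :
    φ (α a q) = ∑ r, if E a r then
      stepWeight φ Lam α w (h a r) a r q * φ (if IsFirstDiff w (h a r) q a then α r q else 0)
      else 0 := by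
  have hEα : ∀ r r', E r r' → α r r' ≠ 0 := fun r r' he => ((hE r r').1 he).2
  by_cases hdiff : ∃ i, w i q ≠ w i a
  · obtain ⟨i₀, hi₀⟩ := exists_isFirstDiff hdiff
    obtain ⟨x, hx0, hx⟩ := ha i₀
    rw [map_alpha_eq_sum_stepWeight hφ hLam0 hdiag hvanish hE hx0 hx hi₀.2]
    refine Finset.sum_congr rfl fun r _ => ite_congr rfl (fun har => ?_) fun _ => rfl
    by_cases hr : h a r = i₀
    · rw [hr, if_pos hi₀]
    rw [if_neg fun hfd => hr (hfd.unique hi₀), map_zero, mul_zero]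
    by_cases hw : w i₀ a = w i₀ r
    · rw [stepWeight, hw, sub_self, zero_div, zero_mul, zero_mul]
    · have hlt : h a r < i₀ := lt_of_le_of_ne ((hmin a r har).2 i₀ hw) hr
      rw [alpha_eq_zero_of_edge hEα hb har (hi₀.1 _ (WithBot.coe_lt_coe.2 hlt)) (hmin a r har).1,
        map_zero, mul_zero]
  · push Not at hdiff
    have hunreach : ¬ReflTransGen E a q := fun haq => by
      rcases haq.cases_head with rfl | ⟨c, hac, hcq⟩
      · exact hne rfl
      · exact ne_of_edge_of_reflTransGen hEα hb hac (hmin a c hac).1 hcq (hdiff _)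
    rw [hd hunreach, map_zero, eq_comm]
    refine Finset.sum_eq_zero fun r _ => ?_
    simp [IsFirstDiff, hdiff]

theorem map_Lam_mul_monoPathSum (hφ : Function.Injective φ) (hLam0 : ∀ p, Lam p ≠ 0)
    (hdiag : ∀ p, α p p = Lam p) (hvanish : ∀ p q, q ≠ p → lam q ≤ lam p → α p q = 0)
    (hE : ∀ r r', E r r' ↔ lam r' = lam r + 1 ∧ α r r' ≠ 0)
    (ha : ∀ j a, ∃ x : V → R, (∀ r, lam a + 1 < lam r → x r = 0) ∧
      ∀ b, α a b * (w j b - w j a) =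
        ∑ r ∈ univ.filter (fun r => lam a < lam r), x r * α r b)
    (hb : ∀ j p q, w j q ≠ w j p → ev (w j q - w j p) ≤ 0 → α p q = 0)
    (hmin : ∀ r r', E r r' →
      w (h r r') r ≠ w (h r r') r' ∧ ∀ j, w j r ≠ w j r' → h r r' ≤ j)
    {p q : V}
    (hd : ∀ r, ReflTransGen E p r → lam r < lam q → ¬ReflTransGen E r q → α r q = 0)
    (L : ℕ) (a : V) (j : WithBot ι) (hpa : ReflTransGen E p a) (hL : lam q - lam a = L) :
    φ (Lam q) * monoPathSum E h (fun a r => stepWeight φ Lam α w (h a r) a r q) q L a j =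
      φ (if AgreeBelow w j q a then α a q else 0) := by
  induction L generalizing a j with
  | zero =>
    rw [monoPathSum_zero]
    by_cases haq : a = q
    · subst haq
      rw [if_pos rfl, if_pos (agreeBelow_refl j a), mul_one, hdiag]
    · rw [if_neg haq, mul_zero, hvanish a q (Ne.symm haq) (by omega), ite_self, map_zero]
  | succ L ih =>
    have hEα : ∀ r r', E r r' → α r r' ≠ 0 := fun r r' he => ((hE r r').1 he).2
    rw [monoPathSum_succ, Finset.mul_sum]
    calc _ = ∑ r, if AgreeBelow w j q a then (if E a r then stepWeight φ Lam α w (h a r) a r q *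
          φ (if IsFirstDiff w (h a r) q a then α r q else 0) else 0) else 0 := by
          refine Finset.sum_congr rfl fun r _ => ?_
          by_cases har : E a r
          · have hr : lam q - lam r = L := by have := ((hE a r).1 har).1; omega
            rw [mul_ite, mul_zero, mul_left_comm, ih r _ (hpa.tail har) hr,
              ite_agreeBelow_eq_ite_isFirstDiff hEα hb hmin har]
            by_cases hfd : IsFirstDiff w (h a r) q a
            · simp only [har, true_and, if_true, hfd.le_iff]
            · simp [hfd]
          · simp [har]
      _ = _ := by
          rw [Finset.sum_ite_irrel, Finset.sum_const_zero,
            ← map_alpha_eq_sum_isFirstDiff hφ hLam0 hdiag hvanish hE hb hmin (ha · a)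
              (by rintro rfl; omega) (hd a hpa (by omega))]
          split_ifs <;> simp

end PathSumFormula

theorem stmt_2_general {m : ℕ} {V : Type*} [Fintype V]
    (lam : V → ℕ) (Lam : V → MvPolynomial (Fin m) ℝ)
    (hLam0 : ∀ p, Lam p ≠ 0)
    (α : V → V → MvPolynomial (Fin m) ℝ)
    (hdiag : ∀ p, α p p = Lam p)
    (hvanish : ∀ p q, q ≠ p → lam q ≤ lam p → α p q = 0)
    (E : V → V → Prop)
    (hE : ∀ r r', E r r' ↔ lam r' = lam r + 1 ∧ α r r' ≠ 0)
    (ξ : Fin m → ℝ) (k : ℕ)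
    (w : Fin k → V → MvPolynomial (Fin m) ℝ)
    (ha : ∀ (j : Fin k) (p : V), ∃ x : V → MvPolynomial (Fin m) ℝ,
      (∀ r, lam r = lam p + 1 → (x r).IsHomogeneous 0) ∧
      (∀ r, lam p + 1 < lam r → x r = 0) ∧
      ∀ q : V, α p q * (w j q - w j p) =
        ∑ r ∈ Finset.univ.filter (fun r => lam p < lam r), x r * α r q)
    (hb : ∀ (j : Fin k) (p q : V), w j q ≠ w j p →
      MvPolynomial.eval ξ (w j q - w j p) ≤ 0 → α p q = 0)
    (h : V → V → Fin k)
    (hmin : ∀ r r', E r r' → w (h r r') r ≠ w (h r r') r' ∧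
      ∀ j, w j r ≠ w j r' → h r r' ≤ j)
    (p q : V)
    (hd : ∀ r : V, (∃ γ : Σ L : ℕ, Fin (L + 1) → V, IsPathBetween E p r γ) →
      lam r < lam q →
      (¬ ∃ γ : Σ L : ℕ, Fin (L + 1) → V, IsPathBetween E r q γ) → α r q = 0) :
    (∀ γ : Σ L : ℕ, Fin (L + 1) → V, IsPathBetween E p q γ → HChainMono h γ →
      ∀ i : Fin γ.1,
        w (h (γ.2 i.castSucc) (γ.2 i.succ)) q -
          w (h (γ.2 i.castSucc) (γ.2 i.succ)) (γ.2 i.castSucc) ≠ 0) ∧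
    toFF m (α p q) =
      toFF m (Lam q) *
      ∑ᶠ (γ : Σ L : ℕ, Fin (L + 1) → V)
        (_ : IsPathBetween E p q γ ∧ HChainMono h γ),
        ∏ i : Fin γ.1,
          ((toFF m (w (h (γ.2 i.castSucc) (γ.2 i.succ)) (γ.2 i.succ)) -
              toFF m (w (h (γ.2 i.castSucc) (γ.2 i.succ)) (γ.2 i.castSucc))) /
            (toFF m (w (h (γ.2 i.castSucc) (γ.2 i.succ)) q) -
              toFF m (w (h (γ.2 i.castSucc) (γ.2 i.succ)) (γ.2 i.castSucc)))) *
          (toFF m (α (γ.2 i.castSucc) (γ.2 i.succ)) / toFF m (Lam (γ.2 i.succ))) := by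
  have hEα : ∀ r r', E r r' → α r r' ≠ 0 := fun r r' he => ((hE r r').1 he).2
  have hlam : ∀ r r', E r r' → lam r' = lam r + 1 := fun r r' he => ((hE r r').1 he).1
  refine ⟨fun γ hγ _ i => sub_ne_zero.2 <|
    ne_of_edge_of_reflTransGen (ev := (MvPolynomial.eval ξ).toAddMonoidHom) hEα hb (hγ.2.2 i)
      (hmin _ _ (hγ.2.2 i)).1 (hγ.reflTransGen_end i.succ), ?_⟩
  have hpath := map_Lam_mul_monoPathSum (φ := toFF m)
    (IsFractionRing.injective (MvPolynomial (Fin m) ℝ) _) hLam0 hdiag hvanish hE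
    (fun j a => (ha j a).imp fun _ hx => hx.2) (ev := (MvPolynomial.eval ξ).toAddMonoidHom) hb hmin
    (fun r hpr hlt hrq =>
      hd r (exists_isPathBetween_iff.2 hpr) hlt (by rwa [exists_isPathBetween_iff]))
    (lam q - lam p) p ⊥ .refl rfl
  rw [if_pos (agreeBelow_bot q p)] at hpath
  rw [← hpath]
  exact congrArg _ (finsum_isPathBetween_hChainMono h _ hlam p q).symm

theorem stmt_2 {m : ℕ} {V : Type*} [Fintype V]
    (lam : V → ℕ) (Lam : V → MvPolynomial (Fin m) ℝ)
    (hLam0 : ∀ p, Lam p ≠ 0)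
    (hLamhom : ∀ p, (Lam p).IsHomogeneous (lam p))
    (α : V → V → MvPolynomial (Fin m) ℝ)
    (hdiag : ∀ p, α p p = Lam p)
    (hvanish : ∀ p q, q ≠ p → lam q ≤ lam p → α p q = 0)
    (E : V → V → Prop)
    (hE : ∀ r r', E r r' ↔ lam r' = lam r + 1 ∧ α r r' ≠ 0)
    (ξ : Fin m → ℝ) (k : ℕ)
    (w : Fin k → V → MvPolynomial (Fin m) ℝ)
    (hwlin : ∀ j p, (w j p).IsHomogeneous 1)
    (ha : ∀ (j : Fin k) (p : V), ∃ x : V → MvPolynomial (Fin m) ℝ,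
      (∀ r, lam r = lam p + 1 → (x r).IsHomogeneous 0) ∧
      (∀ r, lam p + 1 < lam r → x r = 0) ∧
      ∀ q : V, α p q * (w j q - w j p) =
        ∑ r ∈ Finset.univ.filter (fun r => lam p < lam r), x r * α r q)
    (hb : ∀ (j : Fin k) (p q : V), w j q ≠ w j p →
      MvPolynomial.eval ξ (w j q - w j p) ≤ 0 → α p q = 0)
    (hc : ∀ r r', E r r' → ∃ j, w j r ≠ w j r')
    (h : V → V → Fin k)
    (hmin : ∀ r r', E r r' → w (h r r') r ≠ w (h r r') r' ∧
      ∀ j, w j r ≠ w j r' → h r r' ≤ j)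
    (p q : V)
    (hd : ∀ r : V, (∃ γ : Σ L : ℕ, Fin (L + 1) → V, IsPathBetween E p r γ) →
      lam r < lam q →
      (¬ ∃ γ : Σ L : ℕ, Fin (L + 1) → V, IsPathBetween E r q γ) → α r q = 0) :
    (∀ γ : Σ L : ℕ, Fin (L + 1) → V, IsPathBetween E p q γ → HChainMono h γ →
      ∀ i : Fin γ.1,
        w (h (γ.2 i.castSucc) (γ.2 i.succ)) q -
          w (h (γ.2 i.castSucc) (γ.2 i.succ)) (γ.2 i.castSucc) ≠ 0) ∧
    toFF m (α p q) =
      toFF m (Lam q) *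
      ∑ᶠ (γ : Σ L : ℕ, Fin (L + 1) → V)
        (_ : IsPathBetween E p q γ ∧ HChainMono h γ),
        ∏ i : Fin γ.1,
          ((toFF m (w (h (γ.2 i.castSucc) (γ.2 i.succ)) (γ.2 i.succ)) -
              toFF m (w (h (γ.2 i.castSucc) (γ.2 i.succ)) (γ.2 i.castSucc))) /
            (toFF m (w (h (γ.2 i.castSucc) (γ.2 i.succ)) q) -
              toFF m (w (h (γ.2 i.castSucc) (γ.2 i.succ)) (γ.2 i.castSucc)))) *
          (toFF m (α (γ.2 i.castSucc) (γ.2 i.succ)) / toFF m (Lam (γ.2 i.succ))) :=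
  stmt_2_general lam Lam hLam0 α hdiag hvanish E hE ξ k w ha hb h hmin p q hd
end
end

section
/- Fix p ∈ V and let α : V → ℝ[y_1,…,y_m] satisfy: (i) every value α(q) is zero or homogeneous of degree λ(p); (ii) α(q) = 0 for every q ≠ p with λ(q) ≤ λ(p); (iii) for every edge (r,q) ∈ 𝓔, the linear form η(r,q) divides α(q) − α(r). Then α(q) = 0 for every q ∈ V such that there is no ascending path from p to q. -/
open scoped Classical

/-!
Go up along `φ`, which is well founded because `V` is finite. If `α q ≠ 0` and `q ≠ p`, then
`λ p < λ q`. Were `α` zero at every lower neighbour `r` of `q`, the `λ q` linear forms `η r q`,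
being pairwise non-associated primes, would all divide `α q`, so their product, of degree `λ q`,
would divide `α q`, of degree `λ p`. Hence some lower neighbour also carries a nonzero value, and
by induction it, and then `q`, is reached from `p` by an ascending path.
-/

open Finset

theorem Finset.prod_dvd_of_prime_of_not_associated {ι M₀ : Type*} [CommMonoidWithZero M₀]
    [IsCancelMulZero M₀] {s : Finset ι} {f : ι → M₀} {n : M₀}
    (hprime : ∀ i ∈ s, Prime (f i))
    (hassoc : ∀ i ∈ s, ∀ j ∈ s, i ≠ j → ¬ Associated (f i) (f j))
    (hdvd : ∀ i ∈ s, f i ∣ n) : ∏ i ∈ s, f i ∣ n := by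
  induction s using Finset.induction_on generalizing n with
  | empty => simp
  | insert i s hi ih =>
    rw [forall_mem_insert] at hprime hdvd
    have hassoc' : ∀ j ∈ s, ∀ j' ∈ s, j ≠ j' → ¬ Associated (f j) (f j') :=
      fun j hj j' hj' => hassoc j (mem_insert_of_mem hj) j' (mem_insert_of_mem hj')
    obtain ⟨k, rfl⟩ := hdvd.1
    rw [prod_insert hi]
    refine mul_dvd_mul_left _ (ih hprime.2 hassoc' fun j hj => ?_)
    have hndvd : ¬ f j ∣ f i := fun h => hassoc j (mem_insert_of_mem hj) i (mem_insert_self i s)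
      (ne_of_mem_of_not_mem hj hi) ((hprime.2 j hj).associated_of_dvd hprime.1 h)
    exact ((hprime.2 j hj).dvd_or_dvd (hdvd.2 j hj)).resolve_left hndvd

namespace MvPolynomial

variable {σ K : Type*} [Field K]

theorem prime_of_isHomogeneous_one {f : MvPolynomial σ K} (hf0 : f ≠ 0)
    (hf : f.IsHomogeneous 1) : Prime f := by
  refine (irreducible_of_totalDegree_eq_one (hf.totalDegree hf0) fun x hx => ?_).prime
  obtain ⟨d, hd⟩ := ne_zero_iff.mp hf0
  exact isUnit_iff_ne_zero.mpr fun hx0 => hd (zero_dvd_iff.mp (hx0 ▸ hx d))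

theorem exists_eq_smul_of_associated {f g : MvPolynomial σ K} (h : Associated f g) :
    ∃ c : K, g = c • f := by
  obtain ⟨u, rfl⟩ := h
  obtain ⟨c, -, hc⟩ := isUnit_iff_eq_C_of_isReduced.mp u.isUnit
  exact ⟨c, by rw [hc, smul_eq_C_mul, mul_comm]⟩

theorem card_le_totalDegree_of_forall_dvd {ι : Type*} {s : Finset ι}
    {f : ι → MvPolynomial σ K} {a : MvPolynomial σ K} (hf0 : ∀ i ∈ s, f i ≠ 0)
    (hf : ∀ i ∈ s, (f i).IsHomogeneous 1)
    (hprop : ∀ i ∈ s, ∀ j ∈ s, i ≠ j → ∀ c : K, f i ≠ c • f j)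
    (hdvd : ∀ i ∈ s, f i ∣ a) (ha : a ≠ 0) : #s ≤ a.totalDegree := by
  have hprod : ∏ i ∈ s, f i ∣ a := prod_dvd_of_prime_of_not_associated
    (fun i hi => prime_of_isHomogeneous_one (hf0 i hi) (hf i hi))
    (fun i hi j hj hij hassoc => by
      obtain ⟨c, hc⟩ := exists_eq_smul_of_associated hassoc.symm
      exact hprop i hi j hj hij c hc)
    hdvd
  have hdeg : (∏ i ∈ s, f i).totalDegree = #s := by
    simpa using (IsHomogeneous.prod s f (fun _ => 1) hf).totalDegree (prod_ne_zero_iff.mpr hf0)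
  exact hdeg ▸ totalDegree_le_of_dvd_of_isDomain hprod ha

end MvPolynomial

theorem Relation.ReflTransGen.exists_fin_path {V : Type*} {R : V → V → Prop} {a b : V}
    (h : ReflTransGen R a b) :
    ∃ (k : ℕ) (γ : Fin (k + 1) → V), γ 0 = a ∧ γ (Fin.last k) = b ∧
      ∀ i : Fin k, R (γ i.castSucc) (γ i.succ) := by
  induction h with
  | refl => exact ⟨0, fun _ => a, rfl, rfl, fun i => i.elim0⟩
  | @tail _ c _ hbc ih =>
    obtain ⟨k, γ, h0, hlast, hstep⟩ := ih
    refine ⟨k + 1, Fin.snoc γ c, by simpa using h0, by simp, fun i => ?_⟩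
    induction i using Fin.lastCases with
    | last => simpa [hlast] using hbc
    | cast j => rw [Fin.snoc_castSucc, ← Fin.castSucc_succ, Fin.snoc_castSucc]; exact hstep j

theorem stmt_3_general {m : ℕ} {V : Type*} [Fintype V]
    (𝓔 : V → V → Prop)
    (η : V → V → MvPolynomial (Fin m) ℝ)
    (hη0 : ∀ p q, 𝓔 p q → η p q ≠ 0)
    (hηlin : ∀ p q, 𝓔 p q → (η p q).IsHomogeneous 1)
    (hnonprop : ∀ q r r', 𝓔 r q → 𝓔 r' q → r ≠ r' → ∀ c : ℝ, η r q ≠ c • η r' q)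
    (φ : V → ℝ)
    (lam : V → ℕ)
    (hlam : ∀ q, lam q = (Finset.univ.filter (fun r => 𝓔 r q ∧ φ r < φ q)).card)
    (p : V)
    (α : V → MvPolynomial (Fin m) ℝ)
    (hhom : ∀ q, α q = 0 ∨ (α q).IsHomogeneous (lam p))
    (hvanish : ∀ q, q ≠ p → lam q ≤ lam p → α q = 0)
    (hdvd : ∀ r q, 𝓔 r q → η r q ∣ (α q - α r)) :
    ∀ q : V,
      (¬ ∃ (k : ℕ) (γ : Fin (k + 1) → V), γ 0 = p ∧ γ (Fin.last k) = q ∧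
        ∀ i : Fin k, 𝓔 (γ i.castSucc) (γ i.succ) ∧ φ (γ i.castSucc) < φ (γ i.succ)) →
      α q = 0 := by
  have hwf : WellFounded (Function.onFun (· < ·) φ) :=
    Set.wellFoundedOn_range.mp (Set.finite_range φ).wellFoundedOn
  have hreach : ∀ q, α q ≠ 0 →
      Relation.ReflTransGen (fun r q => 𝓔 r q ∧ φ r < φ q) p q := by
    intro q
    induction q using hwf.induction with
    | _ q ih =>
      intro hq
      by_cases hqp : q = p
      · exact hqp ▸ .refl
      obtain ⟨r, hr, hφ, hαr⟩ : ∃ r, 𝓔 r q ∧ φ r < φ q ∧ α r ≠ 0 := by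
        by_contra! hzero
        have hlower : ∀ r ∈ univ.filter (fun r => 𝓔 r q ∧ φ r < φ q), 𝓔 r q ∧ φ r < φ q :=
          fun r hr => (mem_filter.mp hr).2
        have hle := MvPolynomial.card_le_totalDegree_of_forall_dvd
          (fun r hr => hη0 r q (hlower r hr).1) (fun r hr => hηlin r q (hlower r hr).1)
          (fun r hr r' hr' => hnonprop q r r' (hlower r hr).1 (hlower r' hr').1)
          (fun r hr => by
            simpa [hzero r (hlower r hr).1 (hlower r hr).2] using hdvd r q (hlower r hr).1)
          hq
        rw [((hhom q).resolve_left hq).totalDegree hq, ← hlam] at hle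
        exact hq (hvanish q hqp hle)
      exact (ih r hφ hαr).tail ⟨hr, hφ⟩
  intro q hq
  by_contra h
  exact hq (hreach q h).exists_fin_path

theorem stmt_3 {m : ℕ} {V : Type*} [Fintype V]
    (𝓔 : V → V → Prop)
    (hsymm : ∀ p q, 𝓔 p q ↔ 𝓔 q p)
    (hirr : ∀ p, ¬ 𝓔 p p)
    (η : V → V → MvPolynomial (Fin m) ℝ)
    (hη0 : ∀ p q, 𝓔 p q → η p q ≠ 0)
    (hηlin : ∀ p q, 𝓔 p q → (η p q).IsHomogeneous 1)
    (hηanti : ∀ p q, 𝓔 p q → η q p = - η p q)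
    (hnonprop : ∀ q r r', 𝓔 r q → 𝓔 r' q → r ≠ r' → ∀ c : ℝ, η r q ≠ c • η r' q)
    (φ : V → ℝ)
    (lam : V → ℕ)
    (hlam : ∀ q, lam q = (Finset.univ.filter (fun r => 𝓔 r q ∧ φ r < φ q)).card)
    (p : V)
    (α : V → MvPolynomial (Fin m) ℝ)
    (hhom : ∀ q, α q = 0 ∨ (α q).IsHomogeneous (lam p))
    (hvanish : ∀ q, q ≠ p → lam q ≤ lam p → α q = 0)
    (hdvd : ∀ r q, 𝓔 r q → η r q ∣ (α q - α r)) :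
    ∀ q : V,
      (¬ ∃ (k : ℕ) (γ : Fin (k + 1) → V), γ 0 = p ∧ γ (Fin.last k) = q ∧
        ∀ i : Fin k, 𝓔 (γ i.castSucc) (γ i.succ) ∧ φ (γ i.castSucc) < φ (γ i.succ)) →
      α q = 0 :=
  stmt_3_general 𝓔 η hη0 hηlin hnonprop φ lam hlam p α hhom hvanish hdvd
end

section
/- For every ascending path v_1 ≺ v_2 ≺ ⋯ ≺ v_{m+1} in U, define P = Λ_{v_{m+1}} · Π_{i=1}^{m} (v_{i+1} − v_i) / ((v_{m+1} − v_i) · η(v_i, v_{i+1})), an element of the field of fractions of ℝ[y_1,…,y_n]. Then P = c · Π_{r ∈ SV} η(r, v_{m+1}), where c = 1/2 if the path is incomplete and c ∈ {1, 2} if the path is complete. -/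
open scoped Classical

noncomputable section

/-
Model of `U = {±e_1, …, ±e_n}` with the total order
`-e_1 ≺ -e_2 ≺ ⋯ ≺ -e_n ≺ e_n ≺ ⋯ ≺ e_1`: position `k ∈ Fin (2n)` corresponds to
`-e_{k+1}` when `k < n`, and to `e_{2n-k}` otherwise.  Integer vectors are
identified with linear forms in `ℝ[y_1, …, y_n]`.
-/

/-- The index `j` such that the element of `U` at position `k` is `±e_j`. -/
def posIdxU (n : ℕ) (k : Fin (2 * n)) : Fin n :=
  if h : (k : ℕ) < n then ⟨k, h⟩ else ⟨2 * n - 1 - k, by have := k.2; omega⟩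

/-- The position of the antipode: `u ↦ -u` on `U`. -/
def mirrorU (n : ℕ) (k : Fin (2 * n)) : Fin (2 * n) :=
  ⟨2 * n - 1 - k, by have := k.2; omega⟩

/-- The element of `U` at position `k`, as a linear form. -/
def LU (n : ℕ) (k : Fin (2 * n)) : MvPolynomial (Fin n) ℝ :=
  if (k : ℕ) < n then - MvPolynomial.X (posIdxU n k) else MvPolynomial.X (posIdxU n k)

/-- The label `η(r, s)` for `r ≺ s` in `U`: equal to `s - r` when `s ≠ -r`, and to
`e_j` on the antipodal pair `(-e_j, e_j)`. -/
def etaU (n : ℕ) (r s : Fin (2 * n)) : MvPolynomial (Fin n) ℝ :=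
  if s = mirrorU n r then MvPolynomial.X (posIdxU n s) else LU n s - LU n r

/-- `Λ_s = ∏_{r ≺ s} η(r, s)`. -/
def LamU (n : ℕ) (s : Fin (2 * n)) : MvPolynomial (Fin n) ℝ :=
  ∏ r ∈ Finset.univ.filter (fun r => r < s), etaU n r s

/-
Write `s - r = c(r, s) · η(r, s)` with `c = 2` on antipodal pairs and `c = 1` otherwise. Then the
labels `η(v_i, v_{m+1})` occurring in `Λ_{v_{m+1}}` cancel against the denominators of the path,
leaving `∏_{r ∈ SV} η(r, v_{m+1})` times `∏_i c(v_i, v_{i+1}) / c(v_i, v_{m+1})`. An ascending path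
takes at most one step of the form `v_{i+1} = -v_i` and visits `-v_{m+1}` at most once, so numerator
and denominator of this quotient are each `1` or `2`, and the denominator is `2` exactly when
`-v_{m+1}` is visited.
-/

open Finset

lemma StrictMono.prod_filter_lt_last {α M : Type*} [Fintype α] [LinearOrder α] [CommMonoid M]
    {m : ℕ} {v : Fin (m + 1) → α} (hv : StrictMono v) (f : α → M) :
    ∏ r ∈ univ.filter (· < v (Fin.last m)), f r =
      (∏ r ∈ univ.filter (fun r => r < v (Fin.last m) ∧ ∀ i, v i ≠ r), f r) *
        ∏ i : Fin m, f (v i.castSucc) := by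
  rw [← prod_filter_mul_prod_filter_not _ (fun r => ∀ i, v i ≠ r), filter_filter, filter_filter]
  congr 1
  have hvisited : univ.filter (fun r => r < v (Fin.last m) ∧ ¬ ∀ i, v i ≠ r) =
      univ.image (fun i : Fin m => v i.castSucc) := by
    ext r
    simp only [mem_filter, mem_univ, true_and, mem_image, not_forall, not_not]
    constructor
    · rintro ⟨hlt, i, rfl⟩
      obtain ⟨j, rfl⟩ := Fin.exists_castSucc_eq.2 (fun h => hlt.ne (h ▸ rfl))
      exact ⟨j, rfl⟩
    · rintro ⟨i, rfl⟩
      exact ⟨hv (Fin.castSucc_lt_last i), _, rfl⟩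
  rw [hvisited, prod_image fun i _ j _ h => Fin.castSucc_injective m (hv.injective h)]

lemma StrictMono.eq_of_succ_eq_of_antitone {α : Type*} [LinearOrder α] {f : α → α}
    (hf : Antitone f) {m : ℕ} {v : Fin (m + 1) → α} (hv : StrictMono v) {i j : Fin m}
    (hi : v i.succ = f (v i.castSucc)) (hj : v j.succ = f (v j.castSucc)) : i = j := by
  -- for `i < j`: `f (v j) = v (j + 1) > v j ≥ v (i + 1) = f (v i) ≥ f (v j)`
  have no_two_turns : ∀ {i j : Fin m}, i < j → v i.succ = f (v i.castSucc) →
      v j.succ ≠ f (v j.castSucc) := by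
    intro i j hij hi hj
    have hle : v i.succ ≤ v j.castSucc := hv.monotone (Fin.succ_le_castSucc_iff.2 hij)
    have hanti : f (v j.castSucc) ≤ f (v i.castSucc) :=
      hf (hv.monotone (Fin.castSucc_le_castSucc_iff.2 hij.le))
    have hstep : v j.castSucc < v j.succ := hv (Fin.castSucc_lt_succ)
    exact absurd (hj ▸ hanti) (not_le.2 (hstep.trans_le' (hi ▸ hle)))
  rcases lt_trichotomy i j with h | h | h
  · exact absurd hj (no_two_turns h hi)
  · exact h
  · exact absurd hi (no_two_turns h hj)

section
variable {n : ℕ} {K : Type*} [Field K] (ι : MvPolynomial (Fin n) ℝ →+* K)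

lemma mirrorU_eq_rev : mirrorU n = Fin.rev := by
  ext k
  simp only [mirrorU, Fin.val_rev]
  omega

lemma eq_mirrorU_comm {r s : Fin (2 * n)} : s = mirrorU n r ↔ r = mirrorU n s := by
  rw [mirrorU_eq_rev, eq_comm, Fin.rev_eq_iff]

lemma antitone_mirrorU : Antitone (mirrorU n) :=
  mirrorU_eq_rev ▸ Fin.rev_anti

lemma LU_sub_LU_ne_zero {r s : Fin (2 * n)} (h : r ≠ s) : LU n s - LU n r ≠ 0 := by
  have hr := r.2
  have hs := s.2
  have hrs : (r : ℕ) ≠ s := Fin.val_ne_of_ne h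
  intro hc
  -- at the indicator of the coordinate of `s`, `s` evaluates to `±1` and `r` to `0` or `∓1`
  have := congrArg (MvPolynomial.eval (Pi.single (posIdxU n s) 1)) hc
  simp only [LU, posIdxU] at this
  split_ifs at this <;>
    simp only [map_sub, map_neg, map_zero, MvPolynomial.eval_X, Pi.single_apply,
      Fin.ext_iff] at this <;>
    split_ifs at this <;> (try norm_num at this) <;> omega

lemma LU_sub_LU_eq_mul_etaU {r s : Fin (2 * n)} (h : r < s) :
    LU n s - LU n r = (if s = mirrorU n r then 2 else 1) * etaU n r s := by
  unfold etaU
  split_ifs with hm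
  · have hval : (s : ℕ) = 2 * n - 1 - r := congrArg Fin.val hm
    have hlt : (r : ℕ) < s := h
    have hrn : (r : ℕ) < n := by omega
    have hsn : ¬ (s : ℕ) < n := by omega
    have hidx : posIdxU n r = posIdxU n s := by
      simp only [posIdxU, dif_pos hrn, dif_neg hsn, Fin.mk.injEq]; omega
    rw [LU, LU, if_pos hrn, if_neg hsn, hidx]
    ring
  · rw [one_mul]

lemma etaU_ne_zero {r s : Fin (2 * n)} (h : r < s) : etaU n r s ≠ 0 :=
  right_ne_zero_of_mul (LU_sub_LU_eq_mul_etaU h ▸ LU_sub_LU_ne_zero h.ne)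

lemma map_etaU_mul_div {r s t : Fin (2 * n)} (hι : Function.Injective ι) (hrs : r < s)
    (hrt : r < t) :
    ι (etaU n r t) * (ι (LU n s - LU n r) / (ι (LU n t - LU n r) * ι (etaU n r s))) =
      (if s = mirrorU n r then 2 else 1) / (if t = mirrorU n r then 2 else 1) := by
  have hs := congrArg ι (LU_sub_LU_eq_mul_etaU hrs)
  have ht := congrArg ι (LU_sub_LU_eq_mul_etaU hrt)
  rw [map_mul, apply_ite ι, map_ofNat, map_one] at hs ht
  have hηs : ι (etaU n r s) ≠ 0 := (map_ne_zero_iff ι hι).2 (etaU_ne_zero hrs)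
  have hηt : ι (etaU n r t) ≠ 0 := (map_ne_zero_iff ι hι).2 (etaU_ne_zero hrt)
  rw [hs, ht, mul_div_mul_right _ _ hηs, mul_comm, ← div_div, div_mul_cancel₀ _ hηt]

lemma map_LamU_mul_prod_eq {m : ℕ} {v : Fin (m + 1) → Fin (2 * n)} (hι : Function.Injective ι)
    (hv : StrictMono v) :
    ι (LamU n (v (Fin.last m))) *
        ∏ i : Fin m, ι (LU n (v i.succ) - LU n (v i.castSucc)) /
          (ι (LU n (v (Fin.last m)) - LU n (v i.castSucc)) *
            ι (etaU n (v i.castSucc) (v i.succ))) =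
      ι (∏ r ∈ univ.filter (fun r => r < v (Fin.last m) ∧ ∀ i, v i ≠ r),
          etaU n r (v (Fin.last m))) *
        ((if ∃ i : Fin m, v i.succ = mirrorU n (v i.castSucc) then 2 else 1) /
          (if ∃ i : Fin m, v i.castSucc = mirrorU n (v (Fin.last m)) then 2 else 1)) := by
  rw [LamU, hv.prod_filter_lt_last, map_mul, mul_assoc]
  congr 1
  rw [map_prod, ← prod_mul_distrib,
    prod_congr rfl fun i _ =>
      map_etaU_mul_div ι hι (hv Fin.castSucc_lt_succ) (hv (Fin.castSucc_lt_last i)),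
    prod_div_distrib, prod_ite_one, prod_ite_one]
  · simp only [mem_univ, true_and, ← eq_mirrorU_comm]
  · intro i _ j _ hi hj
    exact Fin.castSucc_injective m (hv.injective
      ((eq_mirrorU_comm.1 hi).trans (eq_mirrorU_comm.1 hj).symm))
  · intro i _ j _ hi hj
    exact hv.eq_of_succ_eq_of_antitone antitone_mirrorU hi hj

end

theorem stmt_8_general (n : ℕ) (m : ℕ)
    (v : Fin (m + 1) → Fin (2 * n)) (hv : StrictMono v) :
    let K := FractionRing (MvPolynomial (Fin n) ℝ)
    let ι : MvPolynomial (Fin n) ℝ →+* K := algebraMap _ _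
    let P : K := ι (LamU n (v (Fin.last m))) *
      ∏ i : Fin m, ι (LU n (v i.succ) - LU n (v i.castSucc)) /
        (ι (LU n (v (Fin.last m)) - LU n (v i.castSucc)) *
          ι (etaU n (v i.castSucc) (v i.succ)))
    let SV : Finset (Fin (2 * n)) :=
      Finset.univ.filter (fun r => r < v (Fin.last m) ∧ ∀ i, v i ≠ r)
    let prodSV : K := ι (∏ r ∈ SV, etaU n r (v (Fin.last m)))
    let incomplete : Prop :=
      (∃ i : Fin m, v i.castSucc = mirrorU n (v (Fin.last m))) ∧
        ∀ i : Fin m, v i.succ ≠ mirrorU n (v i.castSucc)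
    (incomplete → P = (1 / 2 : K) * prodSV) ∧
      (¬ incomplete → P = prodSV ∨ P = 2 * prodSV) := by
  intro K ι P SV prodSV incomplete
  have hP : P = prodSV *
      ((if ∃ i : Fin m, v i.succ = mirrorU n (v i.castSucc) then 2 else 1) /
        (if ∃ i : Fin m, v i.castSucc = mirrorU n (v (Fin.last m)) then 2 else 1)) :=
    map_LamU_mul_prod_eq ι (IsFractionRing.injective _ K) hv
  simp only [incomplete, not_and, not_forall, not_not]
  refine ⟨fun ⟨hback, hno_turn⟩ => ?_, fun h => ?_⟩
  · rw [hP, if_pos hback, if_neg (not_exists.2 hno_turn)]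
    ring
  · by_cases hback : ∃ i : Fin m, v i.castSucc = mirrorU n (v (Fin.last m))
    · rw [hP, if_pos hback, if_pos (h hback), div_self two_ne_zero, mul_one]
      exact Or.inl rfl
    · rw [hP, if_neg hback, div_one]
      split_ifs
      · exact Or.inr (mul_comm _ _)
      · exact Or.inl (mul_one _)

theorem stmt_8 (n : ℕ) (hn : 1 ≤ n) (m : ℕ)
    (v : Fin (m + 1) → Fin (2 * n)) (hv : StrictMono v) :
    let K := FractionRing (MvPolynomial (Fin n) ℝ)
    let ι : MvPolynomial (Fin n) ℝ →+* K := algebraMap _ _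
    let P : K := ι (LamU n (v (Fin.last m))) *
      ∏ i : Fin m, ι (LU n (v i.succ) - LU n (v i.castSucc)) /
        (ι (LU n (v (Fin.last m)) - LU n (v i.castSucc)) *
          ι (etaU n (v i.castSucc) (v i.succ)))
    let SV : Finset (Fin (2 * n)) :=
      Finset.univ.filter (fun r => r < v (Fin.last m) ∧ ∀ i, v i ≠ r)
    let prodSV : K := ι (∏ r ∈ SV, etaU n r (v (Fin.last m)))
    let incomplete : Prop :=
      (∃ i : Fin m, v i.castSucc = mirrorU n (v (Fin.last m))) ∧
        ∀ i : Fin m, v i.succ ≠ mirrorU n (v i.castSucc)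
    (incomplete → P = (1 / 2 : K) * prodSV) ∧
      (¬ incomplete → P = prodSV ∨ P = 2 * prodSV) :=
  stmt_8_general n m v hv
end
end

section
/- For every ascending D-path v_1 ≺ v_2 ≺ ⋯ ≺ v_{m+1} in U, define P = Λ^D_{v_{m+1}} · Π_{i=1}^{m} (v_{i+1} − v_i) / ((v_{m+1} − v_i) · (v_{i+1} − v_i)) in the field of fractions of ℝ[y_1,…,y_n]. If the path is complete then P = Π_{r ∈ SV, r ≠ −v_{m+1}} (v_{m+1} − r), and if the path is incomplete then P = (1/(2·v_{m+1})) · Π_{r ∈ SV} (v_{m+1} − r). -/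
/-
Cancelling each edge factor `v_{i+1} - v_i` leaves `Λ^D_s / ∏_{i ≤ m} (s - v_i)` with
`s = v_{m+1}`. The vertices `r ≺ s` split into the path vertices `v_1, …, v_m` and the skipped
ones, so the path factors cancel against `Λ^D_s` except possibly the one at `-s`, which `Λ^D_s`
omits: this happens exactly when the path is incomplete, and then `s - (-s) = 2s` is left in
the denominator.
-/

open scoped Classical

noncomputable section

open Finset

section
variable {α K : Type*} [DecidableEq α] [CommGroupWithZero K] {A B : Finset α} {a : α} (g : α → K)

theorem Finset.prod_erase_div_prod_of_notMem (hAB : A ⊆ B) (ha : a ∉ A)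
    (hg : ∀ r ∈ A, g r ≠ 0) :
    (∏ r ∈ B.erase a, g r) / ∏ r ∈ A, g r = ∏ r ∈ (B \ A).erase a, g r := by
  have hA : A ⊆ B.erase a := fun r hr => mem_erase.2 ⟨ne_of_mem_of_not_mem hr ha, hAB hr⟩
  rw [← prod_sdiff hA, erase_sdiff_comm, mul_div_cancel_right₀ _ (prod_ne_zero_iff.2 hg)]

theorem Finset.prod_erase_div_prod_of_mem (hAB : A ⊆ B) (ha : a ∈ A)
    (hg : ∀ r ∈ A, g r ≠ 0) :
    (∏ r ∈ B.erase a, g r) / ∏ r ∈ A, g r = (∏ r ∈ B \ A, g r) / g a := by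
  have hA : A.erase a ⊆ B.erase a := erase_subset_erase a hAB
  have hsdiff : B.erase a \ A.erase a = B \ A := by
    ext r; simp only [mem_sdiff, mem_erase]; grind
  rw [← prod_sdiff hA, hsdiff, ← mul_prod_erase A g ha,
    mul_div_mul_right _ _ (prod_ne_zero_iff.2 fun r hr => hg r (mem_of_mem_erase hr))]

end

section
variable {α : Type*} [LinearOrder α] [Fintype α] {m : ℕ} {v : Fin (m + 1) → α}

theorem StrictMono.image_castSucc_subset (hv : StrictMono v) :
    univ.image (fun i : Fin m => v i.castSucc) ⊆ univ.filter (· < v (Fin.last m)) := by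
  simp only [subset_iff, mem_image, mem_filter, mem_univ, true_and]
  rintro _ ⟨i, -, rfl⟩
  exact hv (Fin.castSucc_lt_last i)

theorem filter_lt_last_forall_ne_eq_sdiff_image :
    univ.filter (fun r => r < v (Fin.last m) ∧ ∀ i, v i ≠ r) =
      univ.filter (· < v (Fin.last m)) \ univ.image (fun i : Fin m => v i.castSucc) := by
  ext r
  simp only [mem_filter, mem_sdiff, mem_image, mem_univ, true_and, not_exists]
  refine and_congr_right fun hr => ⟨fun h i => h _, fun h i => ?_⟩
  cases i using Fin.lastCases with
  | last => exact hr.ne'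
  | cast i => exact h i

end

theorem coe_posIdxU (n : ℕ) (k : Fin (2 * n)) :
    (posIdxU n k : ℕ) = if (k : ℕ) < n then (k : ℕ) else 2 * n - 1 - k := by
  unfold posIdxU
  split_ifs <;> rfl

theorem coe_mirrorU (n : ℕ) (k : Fin (2 * n)) : (mirrorU n k : ℕ) = 2 * n - 1 - k := rfl

theorem posIdxU_mirrorU (n : ℕ) (k : Fin (2 * n)) : posIdxU n (mirrorU n k) = posIdxU n k := by
  have hk := k.2
  ext
  rw [coe_posIdxU, coe_posIdxU, coe_mirrorU]
  split_ifs <;> omega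

theorem LU_mirrorU (n : ℕ) (k : Fin (2 * n)) : LU n (mirrorU n k) = -LU n k := by
  have hk := k.2
  unfold LU
  rw [posIdxU_mirrorU, coe_mirrorU]
  split_ifs <;> first | omega | simp

theorem LU_injective (n : ℕ) : Function.Injective (LU n) := by
  have neg_X_ne_X : ∀ i j : Fin n, -(MvPolynomial.X i : MvPolynomial (Fin n) ℝ) ≠ .X j :=
    fun i j h => by
      have := congrArg (MvPolynomial.eval fun _ => (1 : ℝ)) h
      norm_num at this
  intro k l h
  unfold LU at h
  split_ifs at h with hk hl hl
  · have := congrArg Fin.val (MvPolynomial.X_injective (neg_inj.1 h))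
    simp only [coe_posIdxU, hk, hl, if_true] at this
    exact Fin.ext this
  · exact absurd h (neg_X_ne_X _ _)
  · exact absurd h.symm (neg_X_ne_X _ _)
  · have := congrArg Fin.val (MvPolynomial.X_injective h)
    simp only [coe_posIdxU, hk, hl, if_false] at this
    exact Fin.ext (by omega)

theorem stmt_9_general (n : ℕ) (m : ℕ)
    (v : Fin (m + 1) → Fin (2 * n)) (hv : StrictMono v) :
    let K := FractionRing (MvPolynomial (Fin n) ℝ)
    let ι : MvPolynomial (Fin n) ℝ →+* K := algebraMap _ _
    let LamD : K := ι (∏ r ∈ Finset.univ.filter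
        (fun r => r < v (Fin.last m) ∧ r ≠ mirrorU n (v (Fin.last m))),
        (LU n (v (Fin.last m)) - LU n r))
    let P : K := LamD *
      ∏ i : Fin m, ι (LU n (v i.succ) - LU n (v i.castSucc)) /
        (ι (LU n (v (Fin.last m)) - LU n (v i.castSucc)) *
          ι (LU n (v i.succ) - LU n (v i.castSucc)))
    let SV : Finset (Fin (2 * n)) :=
      Finset.univ.filter (fun r => r < v (Fin.last m) ∧ ∀ i, v i ≠ r)
    let incomplete : Prop := ∃ i : Fin m, v i.castSucc = mirrorU n (v (Fin.last m))
    (¬ incomplete →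
      P = ι (∏ r ∈ SV.filter (fun r => r ≠ mirrorU n (v (Fin.last m))),
        (LU n (v (Fin.last m)) - LU n r))) ∧
    (incomplete →
      P = ι (∏ r ∈ SV, (LU n (v (Fin.last m)) - LU n r)) /
        (2 * ι (LU n (v (Fin.last m))))) := by
  intro K ι LamD P SV incomplete
  set s := v (Fin.last m)
  set A := univ.image fun i : Fin m => v i.castSucc
  set B := univ.filter (· < s)
  let g : Fin (2 * n) → K := fun r => ι (LU n s - LU n r)
  have hι_sub_ne_zero {k l : Fin (2 * n)} (h : k ≠ l) : ι (LU n k - LU n l) ≠ 0 := by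
    rw [Ne, map_eq_zero_iff ι (IsFractionRing.injective _ K), sub_eq_zero]
    exact fun e => h (LU_injective n e)
  have hAB : A ⊆ B := hv.image_castSucc_subset
  have hg : ∀ r ∈ A, g r ≠ 0 := fun r hr =>
    hι_sub_ne_zero (mem_filter.1 (hAB hr)).2.ne'
  have hLamD : LamD = ∏ r ∈ B.erase (mirrorU n s), g r := by
    rw [← filter_ne', filter_filter, ← map_prod]
  have hpath : ∏ i : Fin m, ι (LU n (v i.succ) - LU n (v i.castSucc)) /
      (g (v i.castSucc) * ι (LU n (v i.succ) - LU n (v i.castSucc))) =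
        (∏ r ∈ A, g r)⁻¹ := by
    rw [prod_image fun i _ j _ h => Fin.castSucc_injective m (hv.injective h),
      ← prod_inv_distrib]
    exact prod_congr rfl fun i _ =>
      div_mul_cancel_right₀ (hι_sub_ne_zero (hv Fin.castSucc_lt_succ).ne') _
  have hP : P = (∏ r ∈ B.erase (mirrorU n s), g r) / ∏ r ∈ A, g r := by
    rw [div_eq_mul_inv, ← hLamD, ← hpath]
  have hSV : SV = B \ A := filter_lt_last_forall_ne_eq_sdiff_image
  have hmem : incomplete ↔ mirrorU n s ∈ A := by
    simp only [incomplete, A, mem_image, mem_univ, true_and]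
    rfl
  refine ⟨fun hc => ?_, fun hc => ?_⟩
  · rw [hP, prod_erase_div_prod_of_notMem g hAB (hmem.not.1 hc) hg, hSV, filter_ne', map_prod]
  · rw [hP, prod_erase_div_prod_of_mem g hAB (hmem.1 hc) hg, hSV, map_prod]
    simp only [g, LU_mirrorU, sub_neg_eq_add, ← two_mul, map_mul, map_ofNat]

theorem stmt_9 (n : ℕ) (hn : 2 ≤ n) (m : ℕ)
    (v : Fin (m + 1) → Fin (2 * n)) (hv : StrictMono v)
    (hD : ∀ i : Fin m, v i.succ ≠ mirrorU n (v i.castSucc)) :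
    let K := FractionRing (MvPolynomial (Fin n) ℝ)
    let ι : MvPolynomial (Fin n) ℝ →+* K := algebraMap _ _
    let LamD : K := ι (∏ r ∈ Finset.univ.filter
        (fun r => r < v (Fin.last m) ∧ r ≠ mirrorU n (v (Fin.last m))),
        (LU n (v (Fin.last m)) - LU n r))
    let P : K := LamD *
      ∏ i : Fin m, ι (LU n (v i.succ) - LU n (v i.castSucc)) /
        (ι (LU n (v (Fin.last m)) - LU n (v i.castSucc)) *
          ι (LU n (v i.succ) - LU n (v i.castSucc)))
    let SV : Finset (Fin (2 * n)) :=
      Finset.univ.filter (fun r => r < v (Fin.last m) ∧ ∀ i, v i ≠ r)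
    let incomplete : Prop := ∃ i : Fin m, v i.castSucc = mirrorU n (v (Fin.last m))
    (¬ incomplete →
      P = ι (∏ r ∈ SV.filter (fun r => r ≠ mirrorU n (v (Fin.last m))),
        (LU n (v (Fin.last m)) - LU n r))) ∧
    (incomplete →
      P = ι (∏ r ∈ SV, (LU n (v (Fin.last m)) - LU n r)) /
        (2 * ι (LU n (v (Fin.last m))))) :=
  stmt_9_general n m v hv
end
end

section
/- Let E be a finite-dimensional real vector space, ω and ω̃ alternating bilinear forms on E, and V ⊆ E a subspace such that: the restriction of ω to V is nondegenerate; ω̃(v, e) = 0 for all v ∈ V and e ∈ E; and the restriction of ω̃ to H := {e ∈ E : ω(e, v) = 0 for all v ∈ V} is nondegenerate. Then E = V ⊕ H, the subspaces V and H are orthogonal for ω̃ + t·ω for every t ∈ ℝ, and there exists t_0 > 0 such that for every t with 0 < t < t_0 the form ω̃ + t·ω is nondegenerate on E. -/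
/-!
Since `ω` is alternating, `H` is the `ω`-orthogonal of `V`, so nondegeneracy of `ω|_V` gives
`E = V ⊕ H`, and the two summands are orthogonal for every `ωt + t • ω` because `ωt` kills `V`.
The form `ωt + t • ω` is therefore block diagonal: on `V` it is `t • ω|_V`, nondegenerate for
`t ≠ 0`, and on `H` it is a perturbation of the nondegenerate `ωt|_H`, which stays nondegenerate
for small `t` because the determinant of its Gram matrix is continuous in `t`.
-/

open Filter Topology

namespace LinearMap

theorem separatingLeft_domRestrict₁₂_iff {R M N : Type*} [CommSemiring R] [AddCommMonoid M]
    [Module R M] [AddCommMonoid N] [Module R N] {B : M →ₗ[R] M →ₗ[R] N} {V : Submodule R M} :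
    (B.domRestrict₁₂ V V).SeparatingLeft ↔ ∀ v ∈ V, (∀ v' ∈ V, B v v' = 0) → v = 0 :=
  ⟨fun h v hv hB => congrArg Subtype.val (h ⟨v, hv⟩ fun v' => hB v' v'.2),
    fun h v hB => Subtype.ext (h v v.2 fun v' hv' => hB ⟨v', hv'⟩)⟩

theorem separatingLeft_of_isCompl {R M N : Type*} [CommRing R] [AddCommGroup M]
    [Module R M] [AddCommGroup N] [Module R N] {B : M →ₗ[R] M →ₗ[R] N} {V W : Submodule R M}
    (hVW : IsCompl V W) (hBVW : ∀ v ∈ V, ∀ w ∈ W, B v w = 0 ∧ B w v = 0)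
    (hV : (B.domRestrict₁₂ V V).SeparatingLeft) (hW : (B.domRestrict₁₂ W W).SeparatingLeft) :
    B.SeparatingLeft := by
  rw [separatingLeft_domRestrict₁₂_iff] at hV hW
  intro e he
  obtain ⟨v, w, hv, hw, rfl⟩ := Submodule.codisjoint_iff_exists_add_eq.mp hVW.codisjoint e
  have hv0 : v = 0 := hV v hv fun v' hv' => by
    simpa [(hBVW v' hv' w hw).2] using he v'
  have hw0 : w = 0 := hW w hw fun w' hw' => by
    simpa [(hBVW v hv w' hw').1] using he w'
  rw [hv0, hw0, add_zero]

theorem eventually_separatingLeft_add_smul {K M : Type*} [Field K] [TopologicalSpace K]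
    [IsTopologicalRing K] [T1Space K] [AddCommGroup M] [Module K M] [FiniteDimensional K M]
    {A : M →ₗ[K] M →ₗ[K] K} (B : M →ₗ[K] M →ₗ[K] K) (hA : A.SeparatingLeft) :
    ∀ᶠ t : K in 𝓝 0, (A + t • B).SeparatingLeft := by
  let b := Module.finBasis K M
  have hcont : Continuous fun t : K => (toMatrix₂ b b (A + t • B)).det := by
    simp only [map_add, map_smul]
    fun_prop
  have hdet : (toMatrix₂ b b (A + (0 : K) • B)).det ≠ 0 := by
    rw [zero_smul, add_zero]
    exact (separatingLeft_iff_det_ne_zero b).mp hA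
  filter_upwards [hcont.continuousAt.eventually_ne hdet] with t ht
  exact (separatingLeft_iff_det_ne_zero b).mpr ht

end LinearMap

open LinearMap LinearMap.BilinForm

theorem stmt_10 {E : Type*} [AddCommGroup E] [Module ℝ E] [FiniteDimensional ℝ E]
    (ω ωt : E →ₗ[ℝ] E →ₗ[ℝ] ℝ)
    (hω_alt : ∀ e : E, ω e e = 0) (hωt_alt : ∀ e : E, ωt e e = 0)
    (V H : Submodule ℝ E)
    (hVnd : ∀ v ∈ V, (∀ v' ∈ V, ω v v' = 0) → v = 0)
    (hperp : ∀ v ∈ V, ∀ e : E, ωt v e = 0)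
    (hH : ∀ e : E, e ∈ H ↔ ∀ v ∈ V, ω e v = 0)
    (hHnd : ∀ h ∈ H, (∀ h' ∈ H, ωt h h' = 0) → h = 0) :
    IsCompl V H ∧
      (∀ t : ℝ, ∀ v ∈ V, ∀ h ∈ H, (ωt + t • ω) v h = 0 ∧ (ωt + t • ω) h v = 0) ∧
      ∃ t₀ : ℝ, 0 < t₀ ∧ ∀ t : ℝ, 0 < t → t < t₀ →
        ∀ e : E, (∀ f : E, (ωt + t • ω) e f = 0) → e = 0 := by
  have hωalt : ω.IsAlt := hω_alt
  have hωtalt : ωt.IsAlt := hωt_alt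
  have hH_orth : H = BilinForm.orthogonal ω V := by
    ext e
    simp only [hH, mem_orthogonal_iff, hωalt.eq_iff]
  have hcompl : IsCompl V H := by
    rw [hH_orth, isCompl_orthogonal_iff_disjoint hωalt.isRefl, ← hH_orth, Submodule.disjoint_def]
    exact fun e heV heH => hVnd e heV ((hH e).mp heH)
  have horth : ∀ t : ℝ, ∀ v ∈ V, ∀ h ∈ H, (ωt + t • ω) v h = 0 ∧ (ωt + t • ω) h v = 0 := by
    intro t v hv h hh
    have hωhv := (hH h).mp hh v hv
    simp [hperp v hv, hωtalt.eq_iff.mp (hperp v hv h), hωhv, hωalt.eq_iff.mp hωhv]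
  obtain ⟨t₀, ht₀, hsmall⟩ := Metric.eventually_nhds_iff.mp
    (eventually_separatingLeft_add_smul (ω.domRestrict₁₂ H H)
      (separatingLeft_domRestrict₁₂_iff.mpr hHnd))
  refine ⟨hcompl, horth, t₀, ht₀, fun t ht htt₀ =>
    separatingLeft_of_isCompl hcompl (horth t) ?_ (hsmall ?_)⟩
  · rw [separatingLeft_domRestrict₁₂_iff]
    intro v hv hvB
    refine hVnd v hv fun v' hv' => ?_
    simpa [hperp v hv, ht.ne'] using hvB v' hv'
  · rwa [Real.dist_eq, sub_zero, abs_of_pos ht]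
end

section
/- For every w ∈ S_{n+1} there exists a unique canonical class α_w. Moreover, if v ∈ S_{n+1} satisfies ℓ(v) = ℓ(w) + 1, then: if v = w ∘ t_{hk} for some transposition t_{hk} with h < k (in which case necessarily w(h) < w(k)), then α_w(v) = Π_{η ∈ Inv(v), η ≠ y_{w(h)} − y_{w(k)}} η; and if v ≠ w ∘ t for every transposition t, then α_w(v) = 0. -/
open scoped Classical

noncomputable section

/-- The inversion set of a permutation `w` of `{1, …, N}`, recorded as the set of
pairs `(i, j)` with `i < j` and `w⁻¹(i) > w⁻¹(j)`; the pair `(i, j)` corresponds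
to the linear form `y_i - y_j ∈ ℤ[y_1, …, y_N]`. -/
def InvSetA (N : ℕ) (w : Equiv.Perm (Fin N)) : Finset (Fin N × Fin N) :=
  Finset.univ.filter fun p => p.1 < p.2 ∧ w⁻¹ p.2 < w⁻¹ p.1

/-- The number of inversions of `w` (its Coxeter length). -/
def lenA (N : ℕ) (w : Equiv.Perm (Fin N)) : ℕ := (InvSetA N w).card

/-- `∏_{η ∈ Inv(w)} η`. -/
def prodInvA (N : ℕ) (w : Equiv.Perm (Fin N)) : MvPolynomial (Fin N) ℤ :=
  ∏ p ∈ InvSetA N w, (MvPolynomial.X p.1 - MvPolynomial.X p.2)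

/-- GKM-compatibility: `y_i - y_j` divides `f(w) - f(t_{ij} ∘ w)` for all `w` and
all `i < j`. -/
def GKMCompatA (N : ℕ) (f : Equiv.Perm (Fin N) → MvPolynomial (Fin N) ℤ) : Prop :=
  ∀ (w : Equiv.Perm (Fin N)) (i j : Fin N), i < j →
    (MvPolynomial.X i - MvPolynomial.X j : MvPolynomial (Fin N) ℤ) ∣
      (f w - f (Equiv.swap i j * w))

/-- A canonical class at `w`. -/
def IsCanonA (N : ℕ) (w : Equiv.Perm (Fin N))
    (α : Equiv.Perm (Fin N) → MvPolynomial (Fin N) ℤ) : Prop :=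
  GKMCompatA N α ∧
  (∀ v, α v = 0 ∨ (α v).IsHomogeneous (lenA N w)) ∧
  α w = prodInvA N w ∧
  ∀ v, v ≠ w → lenA N v ≤ lenA N w → α v = 0

/-!
The canonical classes are built downwards from the longest permutation `w₀`, whose class is
supported at `w₀` alone: if `w h < w k` with `h ⋖ k`, the divided difference
`v ↦ (α (v * t_{hk}) - α v) / (y_{v h} - y_{v k})` of the class at `w * t_{hk}` is the class at `w`.

Everything else rests on one divisibility principle: a GKM-compatible `f` that vanishes at
`t_η ∘ v` for all `η` in a set `S ⊆ Inv(v)` is divisible by `∏_{η ∈ S} η` at `v`, because the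
linear forms are pairwise non-associate primes. Applied to `S = Inv(v)` it gives, by degree,
uniqueness and the vanishing of `α_w v` when `v` is not of the form `w ∘ t`. For `v = w ∘ t_{hk}`
it gives `α_w v = c · ∏_{η ≠ y_{w h} - y_{w k}} η` with `c` constant; modulo `y_{w h} - y_{w k}`
this product agrees with `α_w w = ∏ Inv(w)` (the length condition leaves no value between `w h`
and `w k` at a position between `h` and `k`, so exchanging the two values matches the factors),
and GKM-compatibility along the edge `v — w` then forces `c = 1`.
-/

theorem Finset.prod_dvd_of_pairwise_prime {ι M : Type*} [CommMonoidWithZero M] [IsCancelMulZero M]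
    {s : Finset ι} {p : ι → M} {n : M} (hp : ∀ i ∈ s, Prime (p i))
    (hinj : ∀ i ∈ s, ∀ j ∈ s, p i ∣ p j → i = j) (hn : ∀ i ∈ s, p i ∣ n) :
    ∏ i ∈ s, p i ∣ n := by
  classical
  induction s using Finset.induction_on with
  | empty => simp
  | insert a s ha ih =>
    have hpa := hp a (mem_insert_self a s)
    obtain ⟨m, rfl⟩ := ih (fun i hi => hp i (mem_insert_of_mem hi))
      (fun i hi j hj => hinj i (mem_insert_of_mem hi) j (mem_insert_of_mem hj))
      (fun i hi => hn i (mem_insert_of_mem hi))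
    have hndvd : ¬ p a ∣ ∏ i ∈ s, p i := fun h => by
      obtain ⟨j, hj, hdvd⟩ := hpa.exists_mem_finset_dvd h
      exact ha (hinj a (mem_insert_self a s) j (mem_insert_of_mem hj) hdvd ▸ hj)
    rw [prod_insert ha, mul_comm]
    exact mul_dvd_mul_left _ ((hpa.dvd_or_dvd (hn a (mem_insert_self a s))).resolve_left hndvd)

theorem Equiv.eq_of_swap_eq {α : Type*} [LinearOrder α] {a b r s : α} (hab : a < b)
    (hrs : r < s) (h : Equiv.swap r s = Equiv.swap a b) : (r, s) = (a, b) := by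
  have hr : Equiv.swap a b r ≠ r := by rw [← h, Equiv.swap_apply_left]; exact hrs.ne'
  have hs : Equiv.swap a b s ≠ s := by rw [← h, Equiv.swap_apply_right]; exact hrs.ne
  rw [Equiv.swap_apply_ne_self_iff] at hr hs
  grind

namespace MvPolynomial

variable {σ R : Type*} [CommRing R]

theorem X_sub_X_dvd_X_sub_X_swap [DecidableEq σ] (a b c : σ) :
    (X a - X b : MvPolynomial σ R) ∣ X c - X (Equiv.swap a b c) := by
  rcases eq_or_ne c a with rfl | hca
  · simp
  rcases eq_or_ne c b with rfl | hcb
  · exact ⟨-1, by simp⟩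
  · simp [Equiv.swap_apply_of_ne_of_ne hca hcb]

theorem eq_or_eq_of_X_sub_X_dvd [Nontrivial R] {a b p q : σ} (hpq : p ≠ q)
    (h : (X a - X b : MvPolynomial σ R) ∣ X p - X q) : p = a ∨ p = b := by
  classical
  by_contra! hp
  obtain ⟨c, hc⟩ := h
  have := congrArg (eval fun x => if x = p then (1 : R) else 0) hc
  simp [hp.1.symm, hp.2.symm, hpq.symm] at this

theorem eq_and_eq_of_X_sub_X_dvd [Nontrivial R] {a b p q : σ} (hpq : p ≠ q)
    (h : (X a - X b : MvPolynomial σ R) ∣ X p - X q) : p = a ∧ q = b ∨ p = b ∧ q = a := by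
  have hq := eq_or_eq_of_X_sub_X_dvd hpq.symm (dvd_sub_comm.1 h)
  rcases eq_or_eq_of_X_sub_X_dvd hpq h with hp | hp <;> rcases hq with hq | hq <;> simp_all

theorem eq_zero_of_X_sub_X_dvd_C {a b : σ} {r : R} (h : (X a - X b : MvPolynomial σ R) ∣ C r) :
    r = 0 := by
  obtain ⟨c, hc⟩ := h
  simpa using congrArg (eval 0) hc

theorem prime_X_sub_X [IsDomain R] {a b : σ} (hab : a ≠ b) :
    Prime (X a - X b : MvPolynomial σ R) := by
  classical
  let e := (renameEquiv R (Equiv.optionSubtypeNe b).symm).trans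
    (optionEquivLeft R {x : σ // x ≠ b})
  have he : e (X a - X b) = -(Polynomial.X - Polynomial.C (X ⟨a, hab⟩)) := by
    simp [e, Equiv.optionSubtypeNe_symm_of_ne hab, optionEquivLeft_X_some,
      optionEquivLeft_X_none]
  rw [← MulEquiv.prime_iff e.toMulEquiv]
  exact he ▸ (Polynomial.prime_X_sub_C _).neg

theorem IsHomogeneous.of_mul_left [IsDomain R] {p q : MvPolynomial σ R} {e m : ℕ}
    (hp : p.IsHomogeneous e) (hp0 : p ≠ 0) (hpq : (p * q).IsHomogeneous (e + m)) :
    q.IsHomogeneous m := by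
  let _ := gradedAlgebra (σ := σ) (R := R)
  intro d hd
  by_contra hdm
  replace hdm : d.degree ≠ m := by rwa [Finsupp.degree_eq_weight_one]
  have hmul := DirectSum.coe_decompose_mul_add_of_left_mem (homogeneousSubmodule σ R)
      (b := q) (j := d.degree) ((mem_homogeneousSubmodule _ _).2 hp)
  simp only [DirectSum.decompose, Equiv.coe_fn_mk] at hmul
  erw [decomposition.decompose'_apply, decomposition.decompose'_apply] at hmul
  rw [homogeneousComponent_of_mem hpq, if_neg (by omega), eq_comm] at hmul
  have := congrArg (coeff d) ((mul_eq_zero.1 hmul).resolve_left hp0)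
  rw [coeff_homogeneousComponent, if_pos rfl] at this
  exact hd this

theorem IsHomogeneous.eq_zero_of_dvd [IsDomain R] {p q : MvPolynomial σ R} {d e : ℕ}
    (hq : q.IsHomogeneous e) (hp : p.IsHomogeneous d) (hde : d < e) (hdvd : q ∣ p) : p = 0 := by
  by_contra hp0
  have := totalDegree_le_of_dvd_of_isDomain hdvd hp0
  rw [hq.totalDegree (ne_zero_of_dvd_ne_zero hp0 hdvd), hp.totalDegree hp0] at this
  omega

theorem isHomogeneous_prod_X_sub_X (s : Finset (σ × σ)) :
    (∏ p ∈ s, (X p.1 - X p.2 : MvPolynomial σ R)).IsHomogeneous s.card := by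
  simpa using IsHomogeneous.prod s _ (fun _ => 1)
    fun p _ => (isHomogeneous_X R p.1).sub (isHomogeneous_X R p.2)

variable [LinearOrder σ] [IsDomain R]

theorem eq_of_X_sub_X_dvd {a b p q : σ} (hab : a < b) (hpq : p < q)
    (h : (X a - X b : MvPolynomial σ R) ∣ X p - X q) : (p, q) = (a, b) := by
  rcases eq_and_eq_of_X_sub_X_dvd hpq.ne h with ⟨rfl, rfl⟩ | ⟨rfl, rfl⟩
  · rfl
  · exact absurd hab hpq.not_gt

theorem prod_X_sub_X_ne_zero {s : Finset (σ × σ)} (hs : ∀ p ∈ s, p.1 < p.2) :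
    (∏ p ∈ s, (X p.1 - X p.2 : MvPolynomial σ R)) ≠ 0 :=
  Finset.prod_ne_zero_iff.2 fun p hp => (prime_X_sub_X (hs p hp).ne).ne_zero

theorem not_X_sub_X_dvd_prod {s : Finset (σ × σ)} (hs : ∀ p ∈ s, p.1 < p.2) {a b : σ}
    (hab : a < b) (hns : (a, b) ∉ s) :
    ¬ (X a - X b : MvPolynomial σ R) ∣ ∏ p ∈ s, (X p.1 - X p.2) := fun h => by
  obtain ⟨p, hp, hdvd⟩ := (prime_X_sub_X hab.ne).exists_mem_finset_dvd h
  exact hns (eq_of_X_sub_X_dvd hab (hs p hp) hdvd ▸ hp)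

theorem prod_X_sub_X_dvd {s : Finset (σ × σ)} (hs : ∀ p ∈ s, p.1 < p.2)
    {f : MvPolynomial σ R} (h : ∀ p ∈ s, X p.1 - X p.2 ∣ f) :
    ∏ p ∈ s, (X p.1 - X p.2 : MvPolynomial σ R) ∣ f :=
  Finset.prod_dvd_of_pairwise_prime (fun p hp => prime_X_sub_X (hs p hp).ne)
    (fun p hp q hq hdvd => (eq_of_X_sub_X_dvd (hs p hp) (hs q hq) hdvd).symm) h

end MvPolynomial

open Equiv MvPolynomial Finset

variable {N : ℕ}

theorem mem_invSetA {w : Perm (Fin N)} {p : Fin N × Fin N} :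
    p ∈ InvSetA N w ↔ p.1 < p.2 ∧ w⁻¹ p.2 < w⁻¹ p.1 := by
  simp [InvSetA]

theorem apply_mem_invSetA {w : Perm (Fin N)} {i j : Fin N} :
    (w i, w j) ∈ InvSetA N w ↔ w i < w j ∧ j < i := by
  simp [mem_invSetA]

/-- Exchanges `a` and `b` in a pair; the pairs whose order this would reverse (those made of
`a` and `b`, or of one of them and a value strictly between them) are left fixed. -/
def pairSwap (a b : Fin N) (p : Fin N × Fin N) : Fin N × Fin N :=
  if (swap a b p.1 < swap a b p.2 ↔ p.1 < p.2) then (swap a b p.1, swap a b p.2) else p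

theorem pairSwap_involutive (a b : Fin N) : Function.Involutive (pairSwap a b) := fun p => by
  unfold pairSwap
  split_ifs <;> simp_all

theorem image_pairSwap_subset {w : Perm (Fin N)} {h k : Fin N} (hhk : h < k) (asc : w h < w k) :
    (InvSetA N w).image (pairSwap (w h) (w k)) ⊆ (InvSetA N (w * swap h k)).erase (w h, w k) := by
  intro q hq
  obtain ⟨p, hp, rfl⟩ := mem_image.1 hq
  obtain ⟨i, j, rfl⟩ : ∃ i j, p = (w i, w j) := ⟨w⁻¹ p.1, w⁻¹ p.2, by simp⟩
  have hinj : ∀ x y, w x = w y ↔ x = y := fun x y => w.injective.eq_iff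
  rw [apply_mem_invSetA] at hp
  simp only [pairSwap, swap_apply_apply, Perm.mul_apply, mem_erase, mem_invSetA, mul_inv_rev,
    swap_inv, ne_eq, Perm.coe_inv, symm_apply_apply]
  split_ifs <;>
    simp only [symm_apply_apply, Prod.mk.injEq, hinj, swap_apply_self] <;>
    simp only [swap_apply_def] at * <;> split_ifs at * <;> grind

theorem erase_invSetA_mul_swap {w : Perm (Fin N)} {h k : Fin N} (hhk : h < k) (asc : w h < w k)
    (hmid : ∀ c, h < c → c < k → w c < w h ∨ w k < w c) :
    (InvSetA N (w * swap h k)).erase (w h, w k) = (InvSetA N w).image (pairSwap (w h) (w k)) := by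
  refine Subset.antisymm (fun q hq => ?_) (image_pairSwap_subset hhk asc)
  refine mem_image.2 ⟨pairSwap (w h) (w k) q, ?_, pairSwap_involutive _ _ q⟩
  obtain ⟨i, j, rfl⟩ : ∃ i j, q = (w i, w j) := ⟨w⁻¹ q.1, w⁻¹ q.2, by simp⟩
  have hinj : ∀ x y, w x = w y ↔ x = y := fun x y => w.injective.eq_iff
  have := hmid i
  have := hmid j
  simp only [mem_erase, mem_invSetA, Perm.mul_apply, mul_inv_rev, swap_inv, ne_eq, Perm.coe_inv,
    symm_apply_apply, Prod.mk.injEq, hinj] at hq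
  simp only [pairSwap, swap_apply_apply, Perm.mul_apply, mem_invSetA, Perm.coe_inv,
    symm_apply_apply]
  split_ifs <;>
    simp only [symm_apply_apply] <;>
    simp only [swap_apply_def] at * <;> split_ifs at * <;> grind

theorem invSetA_mul_swap_of_covBy {w : Perm (Fin N)} {h k : Fin N} (hhk : h ⋖ k)
    (asc : w h < w k) : InvSetA N (w * swap h k) = insert (w h, w k) (InvSetA N w) := by
  ext q
  obtain ⟨i, j, rfl⟩ : ∃ i j, q = (w i, w j) := ⟨w⁻¹ q.1, w⁻¹ q.2, by simp⟩
  have hinj : ∀ x y, w x = w y ↔ x = y := fun x y => w.injective.eq_iff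
  have := hhk.1
  have := hhk.2
  simp only [mem_insert, mem_invSetA, Perm.mul_apply, mul_inv_rev, swap_inv, Perm.coe_inv,
    symm_apply_apply, Prod.mk.injEq, hinj]
  simp only [swap_apply_def]
  split_ifs <;> grind

theorem lt_of_mem_invSetA {w : Perm (Fin N)} {p : Fin N × Fin N} (hp : p ∈ InvSetA N w) :
    p.1 < p.2 :=
  (mem_invSetA.1 hp).1

theorem lenA_lt_lenA_mul_swap {w : Perm (Fin N)} {h k : Fin N} (hhk : h < k) (asc : w h < w k) :
    lenA N w < lenA N (w * swap h k) := by
  have hmem : (w h, w k) ∈ InvSetA N (w * swap h k) := by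
    simp [mem_invSetA, asc, hhk, mul_inv_rev]
  calc lenA N w = ((InvSetA N w).image (pairSwap (w h) (w k))).card :=
        (card_image_of_injective _ (pairSwap_involutive _ _).injective).symm
    _ ≤ ((InvSetA N (w * swap h k)).erase (w h, w k)).card :=
        card_le_card (image_pairSwap_subset hhk asc)
    _ < lenA N (w * swap h k) := card_erase_lt_of_mem hmem

theorem lenA_mul_swap_lt {w : Perm (Fin N)} {h k : Fin N} (hhk : h < k) (desc : w k < w h) :
    lenA N (w * swap h k) < lenA N w := by
  simpa [mul_assoc] using lenA_lt_lenA_mul_swap (w := w * swap h k) hhk (by simpa using desc)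

theorem lenA_swap_mul_lt {v : Perm (Fin N)} {p : Fin N × Fin N} (hp : p ∈ InvSetA N v) :
    lenA N (swap p.1 p.2 * v) < lenA N v := by
  obtain ⟨hlt, hpos⟩ := mem_invSetA.1 hp
  rw [swap_mul_eq_mul_swap, swap_comm]
  exact lenA_mul_swap_lt hpos (by simpa using hlt)

theorem lt_or_lt_of_lenA_mul_swap {w : Perm (Fin N)} {h k c : Fin N}
    (hlen : lenA N (w * swap h k) = lenA N w + 1) (hhc : h < c) (hck : c < k) :
    w c < w h ∨ w k < w c := by
  by_contra! hmid
  have h1 : w h < w c := lt_of_le_of_ne hmid.1 (w.injective.ne hhc.ne)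
  have h2 : w c < w k := lt_of_le_of_ne hmid.2 (w.injective.ne hck.ne)
  -- `t_{hk} = t_{hc} t_{ck} t_{hc}`, and each of these three steps would raise the length.
  have hdecomp : w * swap h c * swap c k * swap h c = w * swap h k := by
    rw [mul_assoc, mul_assoc, ← mul_assoc (swap h c), swap_comm h c, swap_comm c k,
      swap_mul_swap_mul_swap hck.ne' (hhc.trans hck).ne']
  have s1 := lenA_lt_lenA_mul_swap hhc h1
  have s2 := lenA_lt_lenA_mul_swap (w := w * swap h c) hck (by
    simpa [swap_apply_of_ne_of_ne (hhc.trans hck).ne' hck.ne'] using h1.trans h2)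
  have s3 := lenA_lt_lenA_mul_swap (w := w * swap h c * swap c k) hhc (by
    simpa [swap_apply_of_ne_of_ne hhc.ne (hhc.trans hck).ne,
      swap_apply_of_ne_of_ne (hhc.trans hck).ne' hck.ne'] using h2)
  rw [hdecomp] at s3
  omega

theorem pair_notMem_invSetA {w : Perm (Fin N)} {h k : Fin N} (hhk : h < k) :
    (w h, w k) ∉ InvSetA N w := by
  simp [apply_mem_invSetA, hhk.le]

theorem lenA_mul_swap_of_covBy {w : Perm (Fin N)} {h k : Fin N} (hhk : h ⋖ k)
    (asc : w h < w k) : lenA N (w * swap h k) = lenA N w + 1 := by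
  rw [lenA, invSetA_mul_swap_of_covBy hhk asc, card_insert_of_notMem (pair_notMem_invSetA hhk.1)]
  rfl

theorem lenA_mul_swap_le_of_covBy (v : Perm (Fin N)) {h k : Fin N} (hhk : h ⋖ k) :
    lenA N (v * swap h k) ≤ lenA N v + 1 := by
  rcases lt_or_gt_of_ne (v.injective.ne hhk.1.ne) with asc | desc
  · exact (lenA_mul_swap_of_covBy hhk asc).le
  · exact (lenA_mul_swap_lt hhk.1 desc).le.trans (Nat.le_succ _)

theorem prodInvA_mul_swap_of_covBy {w : Perm (Fin N)} {h k : Fin N} (hhk : h ⋖ k)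
    (asc : w h < w k) : prodInvA N (w * swap h k) = (X (w h) - X (w k)) * prodInvA N w := by
  rw [prodInvA, invSetA_mul_swap_of_covBy hhk asc, prod_insert (pair_notMem_invSetA hhk.1)]
  rfl

theorem invSetA_of_strictAnti {w : Perm (Fin N)} (hw : StrictAnti w) :
    InvSetA N w = univ.filter fun p => p.1 < p.2 := by
  ext p
  simp only [mem_invSetA, mem_filter, mem_univ, true_and, and_iff_left_iff_imp]
  intro hp
  exact hw.lt_iff_gt.1 (by simpa using hp)

theorem exists_covBy_lt_of_not_strictAnti {w : Perm (Fin N)} (hw : ¬ StrictAnti w) :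
    ∃ h k, h ⋖ k ∧ w h < w k := by
  contrapose! hw
  refine strictAnti_of_succ_lt fun a ha => ?_
  have hcov := Order.covBy_succ_of_not_isMax ha
  exact lt_of_le_of_ne (hw a _ hcov) (w.injective.ne hcov.1.ne')

theorem X_sub_X_dvd_sub_pairSwap {R : Type*} [CommRing R] (a b : Fin N) (p : Fin N × Fin N) :
    (X a - X b : MvPolynomial (Fin N) R) ∣
      (X p.1 - X p.2) - (X (pairSwap a b p).1 - X (pairSwap a b p).2) := by
  unfold pairSwap
  split_ifs
  · rw [sub_sub_sub_comm]
    exact dvd_sub (X_sub_X_dvd_X_sub_X_swap a b p.1) (X_sub_X_dvd_X_sub_X_swap a b p.2)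
  · simp

theorem X_sub_X_dvd_prodInvA_sub_prod_erase {w : Perm (Fin N)} {h k : Fin N} (hhk : h < k)
    (asc : w h < w k) (hlen : lenA N (w * swap h k) = lenA N w + 1) :
    (X (w h) - X (w k) : MvPolynomial (Fin N) ℤ) ∣ prodInvA N w -
      ∏ p ∈ (InvSetA N (w * swap h k)).erase (w h, w k), (X p.1 - X p.2) := by
  rw [erase_invSetA_mul_swap hhk asc fun c => lt_or_lt_of_lenA_mul_swap hlen,
    prod_image (pairSwap_involutive _ _).injective.injOn, prodInvA, ← Ideal.mem_span_singleton,
    ← Ideal.Quotient.eq, map_prod, map_prod]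
  refine prod_congr rfl fun p _ => ?_
  rw [Ideal.Quotient.eq, Ideal.mem_span_singleton]
  exact X_sub_X_dvd_sub_pairSwap _ _ p

variable {f g : Perm (Fin N) → MvPolynomial (Fin N) ℤ}

theorem GKMCompatA.dvd_of_ne (hf : GKMCompatA N f) (v : Perm (Fin N)) {i j : Fin N} (hij : i ≠ j) :
    (X i - X j : MvPolynomial (Fin N) ℤ) ∣ f v - f (swap i j * v) := by
  rcases hij.lt_or_gt with hlt | hgt
  · exact hf v i j hlt
  · rw [← neg_sub, neg_dvd, swap_comm]
    exact hf v j i hgt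

theorem GKMCompatA.sub (hf : GKMCompatA N f) (hg : GKMCompatA N g) : GKMCompatA N (f - g) :=
  fun v i j hij => by
    simpa only [Pi.sub_apply, sub_sub_sub_comm] using dvd_sub (hf v i j hij) (hg v i j hij)

theorem GKMCompatA.prod_dvd (hf : GKMCompatA N f) {v : Perm (Fin N)} {s : Finset (Fin N × Fin N)}
    (hs : s ⊆ InvSetA N v) (hzero : ∀ p ∈ s, f (swap p.1 p.2 * v) = 0) :
    ∏ p ∈ s, (X p.1 - X p.2 : MvPolynomial (Fin N) ℤ) ∣ f v :=
  prod_X_sub_X_dvd (fun p hp => lt_of_mem_invSetA (hs hp)) fun p hp => by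
    simpa [hzero p hp] using hf v p.1 p.2 (lt_of_mem_invSetA (hs hp))

theorem GKMCompatA.eq_zero (hf : GKMCompatA N f) {d : ℕ} (hdeg : ∀ v, (f v).IsHomogeneous d)
    (hlow : ∀ v, lenA N v ≤ d → f v = 0) (v : Perm (Fin N)) : f v = 0 := by
  by_cases hv : lenA N v ≤ d
  · exact hlow v hv
  refine (isHomogeneous_prod_X_sub_X (InvSetA N v)).eq_zero_of_dvd (hdeg v) (not_le.1 hv)
    (hf.prod_dvd subset_rfl fun p hp => GKMCompatA.eq_zero hf hdeg hlow _)
termination_by lenA N v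
decreasing_by exact lenA_swap_mul_lt hp

theorem GKMCompatA.of_divided_difference (hf : GKMCompatA N f) {h k : Fin N} (hhk : h ≠ k)
    (hg : ∀ v, (X (v h) - X (v k)) * g v = f (v * swap h k) - f v) : GKMCompatA N g := by
  intro v r s hrs
  set u := swap r s * v
  by_cases hedge : swap r s = swap (v h) (v k)
  · have hu : u = v * swap h k := by rw [mul_swap_eq_swap_mul, ← hedge]
    suffices g u = g v by rw [this, sub_self]; exact dvd_zero _
    rw [hu]
    refine mul_left_cancel₀ (prime_X_sub_X (v.injective.ne hhk)).ne_zero ?_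
    have hgu := hg u
    simp only [hu, Perm.mul_apply, swap_apply_left, swap_apply_right, mul_assoc, swap_mul_self,
      mul_one] at hgu
    linear_combination -hgu - hg v
  · have hnd : ¬ (X r - X s : MvPolynomial (Fin N) ℤ) ∣ X (v h) - X (v k) := fun hd => hedge <| by
      rcases eq_and_eq_of_X_sub_X_dvd (v.injective.ne hhk) hd with ⟨h1, h2⟩ | ⟨h1, h2⟩
      · rw [h1, h2]
      · rw [h1, h2, swap_comm]
    have hdiff : (X r - X s : MvPolynomial (Fin N) ℤ) ∣
        (X (u h) - X (u k)) - (X (v h) - X (v k)) := by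
      rw [sub_sub_sub_comm, ← neg_sub (X (v h)), ← neg_sub (X (v k))]
      exact dvd_sub (X_sub_X_dvd_X_sub_X_swap r s _).neg_right
        (X_sub_X_dvd_X_sub_X_swap r s _).neg_right
    have key : (X r - X s : MvPolynomial (Fin N) ℤ) ∣ (X (v h) - X (v k)) * (g v - g u) := by
      have e : (X (v h) - X (v k)) * (g v - g u) = (f (v * swap h k) - f (u * swap h k)) -
          (f v - f u) + ((X (u h) - X (u k)) - (X (v h) - X (v k))) * g u := by
        linear_combination hg v - hg u
      rw [e]
      refine dvd_add (dvd_sub ?_ (hf v r s hrs)) (dvd_mul_of_dvd_left hdiff _)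
      simpa [u, mul_assoc] using hf (v * swap h k) r s hrs
    exact ((prime_X_sub_X hrs.ne).dvd_or_dvd key).resolve_left hnd

variable {w : Perm (Fin N)} {α β : Perm (Fin N) → MvPolynomial (Fin N) ℤ}

theorem IsCanonA.isHomogeneous (hα : IsCanonA N w α) (v : Perm (Fin N)) :
    (α v).IsHomogeneous (lenA N w) :=
  (hα.2.1 v).elim (fun h => h ▸ isHomogeneous_zero _ _ _) id

theorem IsCanonA.unique (hα : IsCanonA N w α) (hβ : IsCanonA N w β) : α = β := by
  have hzero := (hα.1.sub hβ.1).eq_zero (fun v => (hα.isHomogeneous v).sub (hβ.isHomogeneous v))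
    fun v hv => by
      by_cases hvw : v = w
      · simp [hvw, hα.2.2.1, hβ.2.2.1]
      · simp [hα.2.2.2 v hvw hv, hβ.2.2.2 v hvw hv]
  exact funext fun v => sub_eq_zero.1 (hzero v)

theorem isCanonA_of_strictAnti (hw : StrictAnti w) :
    IsCanonA N w fun v => if v = w then prodInvA N w else 0 := by
  refine ⟨fun v i j hij => ?_, fun v => ?_, if_pos rfl, fun v hvw _ => if_neg hvw⟩
  · have hdvd : (X i - X j : MvPolynomial (Fin N) ℤ) ∣ prodInvA N w :=
      dvd_prod_of_mem (fun p : Fin N × Fin N => (X p.1 - X p.2 : MvPolynomial (Fin N) ℤ))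
        (a := (i, j)) (by simp [invSetA_of_strictAnti hw, hij])
    dsimp only
    split_ifs <;> simp [hdvd]
  · dsimp only
    split_ifs
    · exact Or.inr (isHomogeneous_prod_X_sub_X _)
    · exact Or.inl rfl

theorem IsCanonA.of_mul_swap {h k : Fin N} (hhk : h ⋖ k) (asc : w h < w k)
    (hf : IsCanonA N (w * swap h k) f)
    (hg : ∀ v, (X (v h) - X (v k)) * g v = f (v * swap h k) - f v) : IsCanonA N w g := by
  have hlen := lenA_mul_swap_of_covBy hhk asc
  have hne (v : Perm (Fin N)) : (X (v h) - X (v k) : MvPolynomial (Fin N) ℤ) ≠ 0 :=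
    (prime_X_sub_X (v.injective.ne hhk.1.ne)).ne_zero
  refine ⟨hf.1.of_divided_difference hhk.1.ne hg, fun v => Or.inr ?_, ?_, fun v hvw hv => ?_⟩
  · refine ((isHomogeneous_X _ _).sub (isHomogeneous_X _ _)).of_mul_left (hne v) ?_
    rw [hg v, add_comm, ← hlen]
    exact (hf.isHomogeneous _).sub (hf.isHomogeneous v)
  · have hgw := hg w
    rw [hf.2.2.1, prodInvA_mul_swap_of_covBy hhk asc,
      hf.2.2.2 w (by simpa using hhk.1.ne) (by omega), sub_zero] at hgw
    exact mul_left_cancel₀ (hne w) hgw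
  · have hgv := hg v
    rw [hf.2.2.2 v (by rintro rfl; omega) (by omega),
      hf.2.2.2 _ (fun h => hvw (mul_right_cancel h)) (by
        have := lenA_mul_swap_le_of_covBy v hhk; omega), sub_zero] at hgv
    exact (mul_eq_zero.1 hgv).resolve_left (hne v)

theorem exists_isCanonA (w : Perm (Fin N)) : ∃ α, IsCanonA N w α := by
  by_cases hw : StrictAnti w
  · exact ⟨_, isCanonA_of_strictAnti hw⟩
  obtain ⟨h, k, hhk, asc⟩ := exists_covBy_lt_of_not_strictAnti hw
  obtain ⟨f, hf⟩ := exists_isCanonA (w * swap h k)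
  have hdvd (v : Perm (Fin N)) :
      (X (v h) - X (v k) : MvPolynomial (Fin N) ℤ) ∣ f (v * swap h k) - f v := by
    rw [mul_swap_eq_swap_mul, dvd_sub_comm]
    exact hf.1.dvd_of_ne v (v.injective.ne hhk.1.ne)
  choose g hg using hdvd
  exact ⟨g, hf.of_mul_swap hhk asc fun v => (hg v).symm⟩
termination_by Fintype.card (Fin N × Fin N) - lenA N w
decreasing_by
  have : lenA N (w * swap h k) ≤ Fintype.card (Fin N × Fin N) := card_le_univ _
  have := lenA_mul_swap_of_covBy hhk asc
  omega

theorem IsCanonA.apply_mul_swap (hα : IsCanonA N w α) {h k : Fin N} (hhk : h < k)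
    (hlen : lenA N (w * swap h k) = lenA N w + 1) :
    w h < w k ∧ α (w * swap h k) =
      ∏ p ∈ (InvSetA N (w * swap h k)).erase (w h, w k), (X p.1 - X p.2) := by
  have asc : w h < w k := lt_of_le_of_ne
    (not_lt.1 fun desc => by have := lenA_mul_swap_lt hhk desc; omega) (w.injective.ne hhk.ne)
  refine ⟨asc, ?_⟩
  set v := w * swap h k
  set P := ∏ p ∈ (InvSetA N v).erase (w h, w k), (X p.1 - X p.2 : MvPolynomial (Fin N) ℤ)
  have hsorted : ∀ p ∈ (InvSetA N v).erase (w h, w k), p.1 < p.2 :=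
    fun p hp => lt_of_mem_invSetA (mem_of_mem_erase hp)
  have hsw : swap (w h) (w k) * v = w := by
    rw [show v = swap (w h) (w k) * w from mul_swap_eq_swap_mul _ _ _, ← mul_assoc, swap_mul_self,
      one_mul]
  have hPdvd : P ∣ α v := hα.1.prod_dvd (erase_subset _ _) fun p hp =>
    hα.2.2.2 _ (fun hpw => ne_of_mem_erase hp
        (eq_of_swap_eq asc (hsorted p hp) (mul_right_cancel (hpw.trans hsw.symm))))
      (by have := lenA_swap_mul_lt (mem_of_mem_erase hp); omega)
  obtain ⟨c, hc⟩ := hPdvd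
  obtain ⟨z, rfl⟩ : ∃ z, c = C z := by
    refine ⟨_, totalDegree_eq_zero_iff_eq_C.1 ((totalDegree_zero_iff_isHomogeneous _).2
      ((isHomogeneous_prod_X_sub_X _).of_mul_left (prod_X_sub_X_ne_zero hsorted) ?_))⟩
    rw [← hc, add_zero, card_erase_of_mem (by simp [v, mem_invSetA, asc, hhk, mul_inv_rev])]
    rw [show #(InvSetA N v) = lenA N w + 1 from hlen, Nat.add_sub_cancel]
    exact hα.isHomogeneous v
  have hedge : (X (w h) - X (w k) : MvPolynomial (Fin N) ℤ) ∣ α v - prodInvA N w := by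
    simpa [hsw, hα.2.2.1] using hα.1 v (w h) (w k) asc
  have hz : (X (w h) - X (w k) : MvPolynomial (Fin N) ℤ) ∣ P * C (z - 1) := by
    have := dvd_add hedge (X_sub_X_dvd_prodInvA_sub_prod_erase hhk asc hlen)
    rwa [sub_add_sub_cancel, hc, ← mul_sub_one, ← map_one C, ← map_sub] at this
  have hz1 := eq_zero_of_X_sub_X_dvd_C (((prime_X_sub_X (w.injective.ne hhk.ne)).dvd_or_dvd
    hz).resolve_left (not_X_sub_X_dvd_prod hsorted asc (notMem_erase _ _)))
  rw [hc, sub_eq_zero.1 hz1, map_one, mul_one]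

theorem IsCanonA.apply_eq_zero (hα : IsCanonA N w α) {v : Perm (Fin N)}
    (hlen : lenA N v = lenA N w + 1) (hv : ∀ h k : Fin N, h ≠ k → v ≠ w * swap h k) :
    α v = 0 := by
  refine (isHomogeneous_prod_X_sub_X (InvSetA N v)).eq_zero_of_dvd (hα.isHomogeneous v)
    (by rw [← lenA]; omega) (hα.1.prod_dvd subset_rfl fun p hp => hα.2.2.2 _ (fun hpw => ?_)
      (by have := lenA_swap_mul_lt hp; omega))
  refine hv (w⁻¹ p.1) (w⁻¹ p.2) (by simpa using (lt_of_mem_invSetA hp).ne) ?_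
  rw [mul_swap_eq_swap_mul, ← hpw]
  simp [← mul_assoc]

theorem stmt_11_general (n : ℕ) :
    (∀ w : Equiv.Perm (Fin (n + 1)),
      ∃! α : Equiv.Perm (Fin (n + 1)) → MvPolynomial (Fin (n + 1)) ℤ,
        IsCanonA (n + 1) w α) ∧
    (∀ (w : Equiv.Perm (Fin (n + 1)))
        (α : Equiv.Perm (Fin (n + 1)) → MvPolynomial (Fin (n + 1)) ℤ),
      IsCanonA (n + 1) w α →
      ∀ v : Equiv.Perm (Fin (n + 1)), lenA (n + 1) v = lenA (n + 1) w + 1 →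
        (∀ h k : Fin (n + 1), h < k → v = w * Equiv.swap h k →
          w h < w k ∧
          α v = ∏ p ∈ (InvSetA (n + 1) v).erase (w h, w k),
            (MvPolynomial.X p.1 - MvPolynomial.X p.2)) ∧
        ((∀ h k : Fin (n + 1), h ≠ k → v ≠ w * Equiv.swap h k) → α v = 0)) := by
  refine ⟨fun w => ?_, fun w α hα v hlen => ⟨?_, hα.apply_eq_zero hlen⟩⟩
  · obtain ⟨α, hα⟩ := exists_isCanonA w
    exact ⟨α, hα, fun β hβ => hβ.unique hα⟩
  · rintro h k hhk rfl
    exact hα.apply_mul_swap hhk hlen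

theorem stmt_11 (n : ℕ) (hn : 1 ≤ n) :
    (∀ w : Equiv.Perm (Fin (n + 1)),
      ∃! α : Equiv.Perm (Fin (n + 1)) → MvPolynomial (Fin (n + 1)) ℤ,
        IsCanonA (n + 1) w α) ∧
    (∀ (w : Equiv.Perm (Fin (n + 1)))
        (α : Equiv.Perm (Fin (n + 1)) → MvPolynomial (Fin (n + 1)) ℤ),
      IsCanonA (n + 1) w α →
      ∀ v : Equiv.Perm (Fin (n + 1)), lenA (n + 1) v = lenA (n + 1) w + 1 →
        (∀ h k : Fin (n + 1), h < k → v = w * Equiv.swap h k →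
          w h < w k ∧
          α v = ∏ p ∈ (InvSetA (n + 1) v).erase (w h, w k),
            (MvPolynomial.X p.1 - MvPolynomial.X p.2)) ∧
        ((∀ h k : Fin (n + 1), h ≠ k → v ≠ w * Equiv.swap h k) → α v = 0)) :=
  stmt_11_general n
end
end
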